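/- arXiv:2604.11644 — 3 statements merged into one kernel-verified Lean document; each statement's English description precedes it below -/
import Mathlib

section
/- Let G be a maximally edge-connected simple graph of order m ≥ 5 with δ(G) ≥ 2, let n ≥ 4, and let S be a minimum 3-restricted edge-cut of G ⊠ Cₙ with components D₁ and D₂ of (G ⊠ Cₙ) − S. If every vertex x ∈ V(G) satisfies that the Cₙ-layer Cₙ^x intersects both D₁ and D₂, or every vertex y ∈ V(Cₙ) satisfies that the G-layer G^y intersects both D₁ and D₂, then |S| > 9δ(G) + 2. -/
open SimpleGraph

/-- The strong product of two simple graphs. -/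
def strongProd {α β : Type*} (G : SimpleGraph α) (H : SimpleGraph β) :
    SimpleGraph (α × β) where
  Adj p q := (p.1 = q.1 ∧ H.Adj p.2 q.2) ∨ (p.2 = q.2 ∧ G.Adj p.1 q.1) ∨
    (G.Adj p.1 q.1 ∧ H.Adj p.2 q.2)
  symm := by
    constructor
    rintro ⟨a, b⟩ ⟨c, d⟩ (⟨h1, h2⟩ | ⟨h1, h2⟩ | ⟨h1, h2⟩)
    · exact Or.inl ⟨h1.symm, h2.symm⟩
    · exact Or.inr (Or.inl ⟨h1.symm, h2.symm⟩)
    · exact Or.inr (Or.inr ⟨h1.symm, h2.symm⟩)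
  loopless := by
    constructor
    rintro ⟨a, b⟩ (⟨h1, h2⟩ | ⟨h1, h2⟩ | ⟨h1, h2⟩)
    · exact H.loopless.irrefl b h2
    · exact G.loopless.irrefl a h2
    · exact G.loopless.irrefl a h1

variable {V : Type*}

/-- The degree of a vertex. -/
noncomputable def deg (G : SimpleGraph V) (v : V) : ℕ := (G.neighborSet v).ncard

/-- The minimum degree δ(G). -/
noncomputable def minDeg (G : SimpleGraph V) : ℕ := sInf {k | ∃ v, deg G v = k}

/-- The number of edges e(G). -/
noncomputable def numEdges (G : SimpleGraph V) : ℕ := G.edgeSet.ncard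

/-- An edge-cut: a set of edges whose deletion disconnects the graph. -/
def IsEdgeCut (G : SimpleGraph V) (S : Set (Sym2 V)) : Prop :=
  S ⊆ G.edgeSet ∧ ¬ (G.deleteEdges S).Connected

/-- The edge-connectivity λ(G). -/
noncomputable def edgeConn (G : SimpleGraph V) : ℕ :=
  sInf {k | ∃ S : Set (Sym2 V), IsEdgeCut G S ∧ S.ncard = k}

/-- A k-restricted edge-cut: an edge-cut such that every component of the
resulting graph has at least k vertices. -/
def IsKRestrictedEdgeCut (G : SimpleGraph V) (k : ℕ) (S : Set (Sym2 V)) : Prop :=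
  S ⊆ G.edgeSet ∧ ¬ (G.deleteEdges S).Connected ∧
    ∀ c : (G.deleteEdges S).ConnectedComponent, k ≤ c.supp.ncard

/-- The k-restricted edge-connectivity λ_k(G), equal to +∞ (⊤) if no
k-restricted edge-cut exists. -/
noncomputable def lamK (G : SimpleGraph V) (k : ℕ) : ℕ∞ :=
  sInf {n : ℕ∞ | ∃ S : Set (Sym2 V), IsKRestrictedEdgeCut G k S ∧ (S.ncard : ℕ∞) = n}

/-- The edge boundary ∂_G(X) = [X, V(G)\X]: edges with exactly one endpoint in X. -/
def edgeBoundary (G : SimpleGraph V) (X : Set V) : Set (Sym2 V) :=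
  {e | e ∈ G.edgeSet ∧ ∃ u v, e = s(u, v) ∧ u ∈ X ∧ v ∉ X}

/-- The minimum edge-degree ξ(G) = min over edges uv of d(u) + d(v) - 2. -/
noncomputable def xiMin (G : SimpleGraph V) : ℕ :=
  sInf {k | ∃ u v, G.Adj u v ∧ k = deg G u + deg G v - 2}

/-- ξ₃(G): minimum size of ∂_G(X) over connected induced subgraphs on 3 vertices. -/
noncomputable def xi3 (G : SimpleGraph V) : ℕ :=
  sInf {k | ∃ X : Set V, X.ncard = 3 ∧ (G.induce X).Connected ∧
    k = (edgeBoundary G X).ncard}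

/-- K₂ ⊙ H: the strong product K₂ ⊠ H minus the edges inside the two H-layers.
The two vertices of K₂ are represented by `false` (= a) and `true` (= b). -/
def odotK2 {β : Type*} (H : SimpleGraph β) : SimpleGraph (Bool × β) where
  Adj p q := p.1 ≠ q.1 ∧ (p.2 = q.2 ∨ H.Adj p.2 q.2)
  symm := by
    constructor
    rintro ⟨a, y⟩ ⟨b, z⟩ ⟨h1, h2⟩
    exact ⟨h1.symm, h2.elim (fun h => Or.inl h.symm) (fun h => Or.inr h.symm)⟩
  loopless := by
    constructor
    rintro ⟨a, y⟩ ⟨h1, _⟩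
    exact h1 rfl


lemma val_add_one'' (n : ℕ) [NeZero n] (hn : 2 ≤ n) (y : Fin n) :
    (y + 1).val = (y.val + 1) % n := by
  rw [Fin.val_add, Fin.val_one', Nat.mod_eq_of_lt hn]

lemma fin_ne_add_one {n : ℕ} [NeZero n] (hn : 2 ≤ n) (y : Fin n) : y ≠ y + 1 := by
  intro hc
  have h1 := val_add_one'' n hn y
  have h2 := congrArg Fin.val hc
  have h3 : y.val < n := y.isLt
  by_cases hy : y.val + 1 < n
  · rw [Nat.mod_eq_of_lt hy] at h1; omega
  · have he : y.val + 1 = n := by omega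
    rw [he, Nat.mod_self] at h1; omega

lemma fin_ne_add_two {n : ℕ} [NeZero n] (hn : 3 ≤ n) (y : Fin n) : y ≠ y + 1 + 1 := by
  intro hc
  have h1 := val_add_one'' n (by omega) y
  have h1' := val_add_one'' n (by omega) (y + 1)
  have h2 := congrArg Fin.val hc
  have h3 : y.val < n := y.isLt
  by_cases hy : y.val + 1 < n
  · rw [Nat.mod_eq_of_lt hy] at h1
    by_cases hy2 : y.val + 2 < n
    · rw [h1] at h1'; rw [Nat.mod_eq_of_lt (by omega)] at h1'; omega
    · have he : y.val + 2 = n := by omega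
      rw [h1] at h1'
      have hee : y.val + 1 + 1 = n := by omega
      rw [hee, Nat.mod_self] at h1'; omega
  · have he : y.val + 1 = n := by omega
    rw [he, Nat.mod_self] at h1
    rw [h1] at h1'
    rw [Nat.mod_eq_of_lt (by omega)] at h1'
    omega

open Fin.NatCast in
lemma cycle_trans {n : ℕ} [NeZero n] (A : Set (Fin n)) (hA : A.Nonempty)
    (hAp : A ≠ Set.univ) : ∃ y : Fin n, y ∈ A ∧ y + 1 ∉ A := by
  by_contra hc
  push_neg at hc
  obtain ⟨a, ha⟩ := hA
  have hstep : ∀ k : ℕ, a + (k : Fin n) ∈ A := by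
    intro k
    induction k with
    | zero => simpa using ha
    | succ k ih =>
        have he : ((k+1 : ℕ) : Fin n) = (k : Fin n) + 1 := by push_cast; ring
        rw [he, ← add_assoc]
        exact hc _ ih
  apply hAp
  ext b
  simp only [Set.mem_univ, iff_true]
  have h2 := hstep (b - a).val
  rwa [Fin.cast_val_eq_self, show a + (b - a) = b by abel] at h2

lemma three_le_ncard {γ : Type*} {s : Set γ} (hs : s.Finite) {a b c : γ}
    (ha : a ∈ s) (hb : b ∈ s) (hc : c ∈ s)
    (hab : a ≠ b) (hac : a ≠ c) (hbc : b ≠ c) : 3 ≤ s.ncard := by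
  have hsub : ({a, b, c} : Set γ) ⊆ s := by
    intro x hx; rcases hx with rfl | rfl | rfl <;> assumption
  have h3 : ({a, b, c} : Set γ).ncard = 3 := by
    rw [Set.ncard_insert_of_notMem (by simp [hab, hac])
      (Set.Finite.subset hs (by intro x hx; rcases hx with rfl | rfl <;> assumption)),
      Set.ncard_pair hbc]
  calc 3 = ({a,b,c} : Set γ).ncard := h3.symm
    _ ≤ s.ncard := Set.ncard_le_ncard hsub hs

lemma cyc_adj_succ {n : ℕ} [NeZero n] (hn : 2 ≤ n) (y : Fin n) :
    (cycleGraph n).Adj y (y + 1) := by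
  rw [cycleGraph_adj']
  right
  rw [add_sub_cancel_left, Fin.val_one', Nat.mod_eq_of_lt hn]

lemma lemB {n : ℕ} [NeZero n] (hn : 4 ≤ n) (A B : Set (Fin n))
    (hA : A.Nonempty) (hAp : A ≠ Set.univ) :
    3 ≤ {q : Fin n × Fin n | (q.1 = q.2 ∨ (cycleGraph n).Adj q.1 q.2) ∧
        (q.1 ∈ A ↔ q.2 ∉ B)}.ncard := by
  classical
  set Q := {q : Fin n × Fin n | (q.1 = q.2 ∨ (cycleGraph n).Adj q.1 q.2) ∧
        (q.1 ∈ A ↔ q.2 ∉ B)} with hQ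
  obtain ⟨y₀, hy₀, hy₀'⟩ := cycle_trans A hA hAp
  have hAc : Aᶜ.Nonempty := Set.nonempty_compl.mpr hAp
  have hAcp : Aᶜ ≠ Set.univ := by
    intro hcon
    rw [Set.compl_univ_iff] at hcon
    exact hA.ne_empty hcon
  obtain ⟨z₀, hz₀, hz₀'⟩ := cycle_trans Aᶜ hAc hAcp
  rw [Set.mem_compl_iff] at hz₀
  rw [Set.mem_compl_iff, not_not] at hz₀'
  -- the four points
  set p1 : Fin n × Fin n := if y₀ ∈ B then (y₀ + 1, y₀) else (y₀, y₀) with hp1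
  set p2 : Fin n × Fin n := if y₀ + 1 ∈ B then (y₀ + 1, y₀ + 1) else (y₀, y₀ + 1) with hp2
  set p3 : Fin n × Fin n := if z₀ ∈ B then (z₀, z₀) else (z₀ + 1, z₀) with hp3
  set p4 : Fin n × Fin n := if z₀ + 1 ∈ B then (z₀, z₀ + 1) else (z₀ + 1, z₀ + 1) with hp4
  have adj1 : ∀ y : Fin n, (cycleGraph n).Adj (y + 1) y := fun y => (cyc_adj_succ (by omega) y).symm
  have adj2 : ∀ y : Fin n, (cycleGraph n).Adj y (y + 1) := fun y => cyc_adj_succ (by omega) y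
  have hm1 : p1 ∈ Q := by
    by_cases hb : y₀ ∈ B <;> simp only [hp1, if_pos, if_neg, hb, if_true, if_false]
    · exact ⟨Or.inr (adj1 y₀), by simp [hy₀', hb]⟩
    · exact ⟨Or.inl rfl, by simp [hy₀, hb]⟩
  have hm2 : p2 ∈ Q := by
    by_cases hb : y₀ + 1 ∈ B <;> simp only [hp2, hb, if_true, if_false]
    · exact ⟨Or.inl rfl, by simp [hy₀', hb]⟩
    · exact ⟨Or.inr (adj2 y₀), by simp [hy₀, hb]⟩
  have hm3 : p3 ∈ Q := by
    by_cases hb : z₀ ∈ B <;> simp only [hp3, hb, if_true, if_false]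
    · exact ⟨Or.inl rfl, by simp [hz₀, hb]⟩
    · exact ⟨Or.inr (adj1 z₀), by simp [hz₀', hb]⟩
  have hm4 : p4 ∈ Q := by
    by_cases hb : z₀ + 1 ∈ B <;> simp only [hp4, hb, if_true, if_false]
    · exact ⟨Or.inr (adj2 z₀), by simp [hz₀, hb]⟩
    · exact ⟨Or.inl rfl, by simp [hz₀', hb]⟩
  -- second coordinates
  have hs1 : p1.2 = y₀ := by by_cases hb : y₀ ∈ B <;> simp [hp1, hb]
  have hs2 : p2.2 = y₀ + 1 := by by_cases hb : y₀ + 1 ∈ B <;> simp [hp2, hb]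
  have hs3 : p3.2 = z₀ := by by_cases hb : z₀ ∈ B <;> simp [hp3, hb]
  have hs4 : p4.2 = z₀ + 1 := by by_cases hb : z₀ + 1 ∈ B <;> simp [hp4, hb]
  have hyz : y₀ ≠ z₀ := fun h => hz₀ (h ▸ hy₀)
  have hQfin : Q.Finite := Set.toFinite Q
  have hne1 : y₀ ≠ y₀ + 1 := fin_ne_add_one (by omega) y₀
  by_cases hcase : y₀ = z₀ + 1
  · -- use p1 p2 p3
    have h23 : y₀ + 1 ≠ z₀ := by
      intro hcon
      exact fin_ne_add_two (n := n) (by omega) y₀ (hcase.trans (congrArg (· + 1) hcon.symm))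
    refine three_le_ncard hQfin hm1 hm2 hm3 ?_ ?_ ?_
    · intro hcon
      have h := congrArg Prod.snd hcon; rw [hs1, hs2] at h; exact hne1 h
    · intro hcon
      have h := congrArg Prod.snd hcon; rw [hs1, hs3] at h; exact hyz h
    · intro hcon
      have h := congrArg Prod.snd hcon; rw [hs2, hs3] at h; exact h23 h
  · -- use p1 p2 p4
    refine three_le_ncard hQfin hm1 hm2 hm4 ?_ ?_ ?_
    · intro hcon
      have h := congrArg Prod.snd hcon; rw [hs1, hs2] at h; exact hne1 h
    · intro hcon
      have h := congrArg Prod.snd hcon; rw [hs1, hs4] at h; exact hcase h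
    · intro hcon
      have h := congrArg Prod.snd hcon; rw [hs2, hs4] at h
      exact hyz (add_right_cancel h)


lemma lemA_empty {α : Type*} [Fintype α] (G : SimpleGraph α) (δ : ℕ)
    (hdeg : ∀ v, δ ≤ (G.neighborSet v).ncard)
    (X X' : Set α) (hX : X.Nonempty) (hX' : X'.Nonempty) (hdisj : X ∩ X' = ∅) :
    2*δ ≤ {p : α × α | (p.1 = p.2 ∨ G.Adj p.1 p.2) ∧ (p.1 ∈ X ↔ p.2 ∉ X')}.ncard := by
  classical
  set P := {p : α × α | (p.1 = p.2 ∨ G.Adj p.1 p.2) ∧ (p.1 ∈ X ↔ p.2 ∉ X')} with hP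
  obtain ⟨a, ha⟩ := hX
  obtain ⟨a', ha'⟩ := hX'
  have hdisj' : ∀ x, x ∈ X → x ∉ X' := by
    intro x hx hx'
    have : x ∈ X ∩ X' := ⟨hx, hx'⟩
    rw [hdisj] at this
    exact this
  have haa : a ≠ a' := fun h => hdisj' a ha (h ▸ ha')
  set S1 : Set (α × α) := (fun b => (a, b)) '' (insert a (G.neighborSet a) \ X') with hS1
  set S2 : Set (α × α) := (fun b => (b, a')) '' (insert a' (G.neighborSet a') \ X) with hS2
  set S3 : Set (α × α) := (fun t => (t, t)) '' ((X ∪ X') \ {a, a'}) with hS3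
  -- memberships
  have hS1P : S1 ⊆ P := by
    rintro _ ⟨b, ⟨hb1, hb2⟩, rfl⟩
    constructor
    · rcases hb1 with rfl | hb1
      · exact Or.inl rfl
      · exact Or.inr hb1
    · exact iff_of_true ha hb2
  have hS2P : S2 ⊆ P := by
    rintro _ ⟨b, ⟨hb1, hb2⟩, rfl⟩
    constructor
    · rcases hb1 with rfl | hb1
      · exact Or.inl rfl
      · exact Or.inr hb1.symm
    · exact iff_of_false hb2 (not_not_intro ha')
  have hS3P : S3 ⊆ P := by
    rintro _ ⟨t, ⟨ht1, _⟩, rfl⟩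
    refine ⟨Or.inl rfl, ?_⟩
    rcases ht1 with ht | ht
    · exact iff_of_true ht (hdisj' t ht)
    · exact iff_of_false (fun hh => hdisj' t hh ht) (not_not_intro ht)
  -- disjointness
  have d12 : Disjoint S1 S2 := by
    rw [Set.disjoint_left]
    rintro _ ⟨b, ⟨_, _⟩, rfl⟩ ⟨c, ⟨_, hc2⟩, hceq⟩
    have : c = a := congrArg Prod.fst hceq
    exact hc2 (this ▸ ha)
  have d13 : Disjoint S1 S3 := by
    rw [Set.disjoint_left]
    rintro _ ⟨b, ⟨_, _⟩, rfl⟩ ⟨t, ⟨_, ht2⟩, hteq⟩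
    have : t = a := congrArg Prod.fst hteq
    exact ht2 (by simp [this])
  have d23 : Disjoint S2 S3 := by
    rw [Set.disjoint_left]
    rintro _ ⟨b, ⟨_, _⟩, rfl⟩ ⟨t, ⟨_, ht2⟩, hteq⟩
    have : t = a' := congrArg Prod.snd hteq
    exact ht2 (by simp [this])
  -- cardinalities
  have hfin : ∀ s : Set (α × α), s.Finite := fun s => Set.toFinite s
  have hc1 : 1 + δ ≤ S1.ncard + X'.ncard := by
    have e1 : S1.ncard = (insert a (G.neighborSet a) \ X').ncard :=
      Set.ncard_image_of_injective _ (fun b c h => congrArg Prod.snd h)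
    have e2 : (insert a (G.neighborSet a)).ncard = (G.neighborSet a).ncard + 1 :=
      Set.ncard_insert_of_notMem (G.notMem_neighborSet_self) (Set.toFinite _)
    have e3 := Set.ncard_le_ncard_diff_add_ncard (insert a (G.neighborSet a)) X'
    have := hdeg a
    omega
  have hc2 : 1 + δ ≤ S2.ncard + X.ncard := by
    have e1 : S2.ncard = (insert a' (G.neighborSet a') \ X).ncard :=
      Set.ncard_image_of_injective _ (fun b c h => congrArg Prod.fst h)
    have e2 : (insert a' (G.neighborSet a')).ncard = (G.neighborSet a').ncard + 1 :=
      Set.ncard_insert_of_notMem (G.notMem_neighborSet_self) (Set.toFinite _)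
    have e3 := Set.ncard_le_ncard_diff_add_ncard (insert a' (G.neighborSet a')) X
    have := hdeg a'
    omega
  have hc3 : X.ncard + X'.ncard ≤ S3.ncard + 2 := by
    have e1 : S3.ncard = ((X ∪ X') \ {a, a'}).ncard :=
      Set.ncard_image_of_injective _ (fun b c h => congrArg Prod.fst h)
    have e2 : (X ∪ X').ncard = X.ncard + X'.ncard := by
      rw [Set.ncard_union_eq (Set.disjoint_iff_inter_eq_empty.mpr hdisj)
        (Set.toFinite _) (Set.toFinite _)]
    have e3 := Set.ncard_le_ncard_diff_add_ncard (X ∪ X') ({a, a'} : Set α)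
    have e4 : ({a, a'} : Set α).ncard ≤ 2 := by
      apply le_trans (Set.ncard_insert_le _ _)
      simp
    omega
  have hsub : S1 ∪ S2 ∪ S3 ⊆ P := by
    intro p hp
    rcases hp with (hp | hp) | hp
    exacts [hS1P hp, hS2P hp, hS3P hp]
  have hcard : S1.ncard + S2.ncard + S3.ncard ≤ P.ncard := by
    have e1 : (S1 ∪ S2 ∪ S3).ncard = S1.ncard + S2.ncard + S3.ncard := by
      rw [Set.ncard_union_eq (by
          rw [Set.disjoint_union_left]; exact ⟨d13, d23⟩) (hfin _) (hfin _),
        Set.ncard_union_eq d12 (hfin _) (hfin _)]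
    rw [← e1]
    exact Set.ncard_le_ncard hsub (hfin _)
  have hX1 : 1 ≤ X.ncard := Set.ncard_pos (Set.toFinite _) |>.mpr ⟨a, ha⟩
  have hX1' : 1 ≤ X'.ncard := Set.ncard_pos (Set.toFinite _) |>.mpr ⟨a', ha'⟩
  omega


lemma lemA {α : Type*} [Fintype α] (G : SimpleGraph α) (δ : ℕ)
    (hdeg : ∀ v, δ ≤ (G.neighborSet v).ncard)
    (hbnd : ∀ Y : Set α, Y.Nonempty → Y ≠ Set.univ →
      δ ≤ {p : α × α | G.Adj p.1 p.2 ∧ p.1 ∈ Y ∧ p.2 ∉ Y}.ncard)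
    (X X' : Set α) (hX : X.Nonempty) (hX' : X'.Nonempty)
    (hXp : X ≠ Set.univ) (hX'p : X' ≠ Set.univ) :
    2*δ ≤ {p : α × α | (p.1 = p.2 ∨ G.Adj p.1 p.2) ∧ (p.1 ∈ X ↔ p.2 ∉ X')}.ncard := by
  classical
  by_cases hint : X ∩ X' = ∅
  · exact lemA_empty G δ hdeg X X' hX hX' hint
  by_cases huni : Xᶜ ∩ X'ᶜ = ∅
  · -- complement case
    have hXc : Xᶜ.Nonempty := Set.nonempty_compl.mpr hXp
    have hX'c : X'ᶜ.Nonempty := Set.nonempty_compl.mpr hX'p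
    have h := lemA_empty G δ hdeg Xᶜ X'ᶜ hXc hX'c huni
    have heq : {p : α × α | (p.1 = p.2 ∨ G.Adj p.1 p.2) ∧ (p.1 ∈ Xᶜ ↔ p.2 ∉ X'ᶜ)}
        = {p : α × α | (p.1 = p.2 ∨ G.Adj p.1 p.2) ∧ (p.1 ∈ X ↔ p.2 ∉ X')} := by
      ext p
      simp only [Set.mem_setOf_eq, Set.mem_compl_iff, not_not]
      constructor
      · rintro ⟨h1, h2⟩; exact ⟨h1, by tauto⟩
      · rintro ⟨h1, h2⟩; exact ⟨h1, by tauto⟩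
    rwa [heq] at h
  · -- main case
    set P := {p : α × α | (p.1 = p.2 ∨ G.Adj p.1 p.2) ∧ (p.1 ∈ X ↔ p.2 ∉ X')} with hP
    have hIne : (X ∩ X').Nonempty := Set.nonempty_iff_ne_empty.mpr hint
    have hUne : (X ∪ X') ≠ Set.univ := by
      intro hcon
      apply huni
      rw [← Set.compl_union, hcon, Set.compl_univ]
    have hIp : (X ∩ X') ≠ Set.univ := by
      intro hcon
      apply hUne
      apply Set.eq_univ_of_univ_subset
      rw [← hcon]
      exact le_trans Set.inter_subset_left Set.subset_union_left
    have hUnion_ne : (X ∪ X').Nonempty := hX.mono Set.subset_union_left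
    set BI := {p : α × α | G.Adj p.1 p.2 ∧ p.1 ∈ X ∩ X' ∧ p.2 ∉ X ∩ X'} with hBI
    set BU := {p : α × α | G.Adj p.1 p.2 ∧ p.1 ∈ X ∪ X' ∧ p.2 ∉ X ∪ X'} with hBU
    set FI : α × α → α × α := fun p => if p.2 ∈ X' then (p.2, p.1) else p with hFI
    set FU : α × α → α × α := fun p => if p.1 ∈ X' then (p.2, p.1) else p with hFU
    have hBIP : FI '' BI ⊆ P := by
      rintro _ ⟨⟨u, v⟩, ⟨hadj, hu, hv⟩, rfl⟩
      simp only [Set.mem_inter_iff, not_and_or] at hu hv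
      by_cases hvX' : v ∈ X'
      · have hvX : v ∉ X := by tauto
        simp only [hFI, if_pos hvX']
        exact ⟨Or.inr hadj.symm, iff_of_false hvX (not_not_intro hu.2)⟩
      · simp only [hFI, if_neg hvX']
        exact ⟨Or.inr hadj, iff_of_true hu.1 hvX'⟩
    have hBUP : FU '' BU ⊆ P := by
      rintro _ ⟨⟨u, v⟩, ⟨hadj, hu, hv⟩, rfl⟩
      rw [Set.mem_union] at hu
      simp only [Set.mem_union, not_or] at hv
      by_cases huX' : u ∈ X'
      · simp only [hFU, if_pos huX']
        exact ⟨Or.inr hadj.symm, iff_of_false hv.1 (not_not_intro huX')⟩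
      · have huX : u ∈ X := by tauto
        simp only [hFU, if_neg huX']
        exact ⟨Or.inr hadj, iff_of_true huX hv.2⟩
    have hBIinj : Set.InjOn FI BI := by
      rintro ⟨u, v⟩ ⟨hadj, hu, hv⟩ ⟨u', v'⟩ ⟨hadj', hu', hv'⟩ heq
      simp only [hFI] at heq
      by_cases h1 : v ∈ X' <;> by_cases h2 : v' ∈ X' <;>
        simp only [h1, h2, if_pos, if_neg, if_true, if_false] at heq
      · have e1 : v = v' := congrArg Prod.fst heq
        have e2 : u = u' := congrArg Prod.snd heq
        rw [e1, e2]
      · have e1 : v = u' := congrArg Prod.fst heq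
        exact absurd (e1 ▸ hu') hv
      · have e1 : u = v' := congrArg Prod.fst heq
        exact absurd (e1.symm ▸ hu) hv'
      · exact heq
    have hBUinj : Set.InjOn FU BU := by
      rintro ⟨u, v⟩ ⟨hadj, hu, hv⟩ ⟨u', v'⟩ ⟨hadj', hu', hv'⟩ heq
      simp only [Set.mem_union, not_or] at hv hv'
      simp only [hFU] at heq
      by_cases h1 : u ∈ X' <;> by_cases h2 : u' ∈ X' <;>
        simp only [h1, h2, if_pos, if_neg, if_true, if_false] at heq
      · have e1 : v = v' := congrArg Prod.fst heq
        have e2 : u = u' := congrArg Prod.snd heq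
        rw [e1, e2]
      · have e1 : u = v' := congrArg Prod.snd heq
        exact absurd (e1 ▸ h1) hv'.2
      · have e1 : u = v' := congrArg Prod.fst heq
        rcases hu with hu | hu
        · exact absurd (e1 ▸ hu) hv'.1
        · exact absurd (e1 ▸ hu) hv'.2
      · exact heq
    have hdisjI : Disjoint (FI '' BI) (FU '' BU) := by
      rw [Set.disjoint_left]
      rintro _ ⟨⟨u, v⟩, ⟨hadj, hu, hv⟩, rfl⟩ ⟨⟨u', v'⟩, ⟨hadj', hu', hv'⟩, heq⟩
      simp only [Set.mem_union, not_or] at hv'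
      simp only [hFI, hFU] at heq
      have huX' : u ∈ X' := hu.2
      by_cases h1 : v ∈ X' <;> by_cases h2 : u' ∈ X' <;>
        simp only [h1, h2, if_pos, if_neg, if_true, if_false] at heq
      · -- (v',u') = (v,u) : v' = v ∈ X', but v' ∉ X'
        have e1 : v' = v := congrArg Prod.fst heq
        exact hv'.2 (e1 ▸ h1)
      · -- (u',v') = (v,u) : v' = u ∈ X', contra
        have e2 : v' = u := congrArg Prod.snd heq
        exact hv'.2 (e2 ▸ huX')
      · -- (v',u') = (u,v) : v' = u ∈ X'
        have e1 : v' = u := congrArg Prod.fst heq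
        exact hv'.2 (e1 ▸ huX')
      · -- (u',v') = (u,v) : u' = u ∈ X', contra h2
        have e1 : u' = u := congrArg Prod.fst heq
        exact h2 (e1 ▸ huX')
    have hI : δ ≤ BI.ncard := hbnd (X ∩ X') hIne hIp
    have hU : δ ≤ BU.ncard := hbnd (X ∪ X') hUnion_ne hUne
    have hcard : BI.ncard + BU.ncard ≤ P.ncard := by
      have e1 : (FI '' BI ∪ FU '' BU).ncard = BI.ncard + BU.ncard := by
        rw [Set.ncard_union_eq hdisjI (Set.toFinite _) (Set.toFinite _),
          Set.ncard_image_of_injOn hBIinj, Set.ncard_image_of_injOn hBUinj]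
      rw [← e1]
      exact Set.ncard_le_ncard (Set.union_subset hBIP hBUP) (Set.toFinite _)
    omega


lemma boundary_ge {α : Type*} [Fintype α] (G : SimpleGraph α)
    (hmax : edgeConn G = minDeg G) (Y : Set α) (hY : Y.Nonempty) (hYp : Y ≠ Set.univ) :
    minDeg G ≤ {p : α × α | G.Adj p.1 p.2 ∧ p.1 ∈ Y ∧ p.2 ∉ Y}.ncard := by
  classical
  set B := edgeBoundary G Y with hB
  obtain ⟨a, ha⟩ := hY
  obtain ⟨b, hb⟩ := (Set.ne_univ_iff_exists_notMem Y).mp hYp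
  have hwalk : ∀ u v : α, (G.deleteEdges B).Walk u v → u ∈ Y → v ∈ Y := by
    intro u v w
    induction w with
    | nil => exact id
    | @cons u u' v h p ih =>
        intro hu
        apply ih
        rw [SimpleGraph.deleteEdges_adj] at h
        by_contra hu'
        exact h.2 ⟨(SimpleGraph.mem_edgeSet G).mpr h.1, u, u', rfl, hu, hu'⟩
  have hcut : IsEdgeCut G B := by
    constructor
    · intro e he; exact he.1
    · intro hconn
      exact absurd ((hconn.preconnected a b).elim (fun w => hwalk a b w ha)) hb
  have h1 : edgeConn G ≤ B.ncard := Nat.sInf_le ⟨B, hcut, rfl⟩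
  have h2 : B.ncard ≤ {p : α × α | G.Adj p.1 p.2 ∧ p.1 ∈ Y ∧ p.2 ∉ Y}.ncard := by
    have himg : B = (fun p : α × α => s(p.1, p.2)) ''
        {p : α × α | G.Adj p.1 p.2 ∧ p.1 ∈ Y ∧ p.2 ∉ Y} := by
      ext e
      constructor
      · rintro ⟨he, u, v, rfl, hu, hv⟩
        exact ⟨(u, v), ⟨(SimpleGraph.mem_edgeSet G).mp he, hu, hv⟩, rfl⟩
      · rintro ⟨⟨u, v⟩, ⟨hadj, hu, hv⟩, rfl⟩
        exact ⟨(SimpleGraph.mem_edgeSet G).mpr hadj, u, v, rfl, hu, hv⟩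
    rw [himg]
    exact Set.ncard_image_le (Set.toFinite _)
  omega


lemma fiber_sum {β γ : Type*} [DecidableEq β] [DecidableEq γ] (T : Finset β) (f : β → γ)
    (I : Finset γ) : ∑ c ∈ I, (T.filter (fun e => f e = c)).card ≤ T.card := by
  rw [← Finset.card_biUnion (by
    intro c _ c' _ hcc'
    apply Finset.disjoint_left.mpr
    intro e he he'
    exact hcc' ((Finset.mem_filter.mp he).2.symm.trans (Finset.mem_filter.mp he').2))]
  apply Finset.card_le_card
  intro e he
  simp only [Finset.mem_biUnion] at he
  obtain ⟨c, _, he⟩ := he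
  exact (Finset.mem_filter.mp he).1


/-- Let G be maximally edge-connected of order m ≥ 5 with
δ(G) ≥ 2, n ≥ 4 and S a minimum 3-restricted edge-cut of G ⊠ Cₙ with the two
components D₁, D₂. If every Cₙ-layer meets both components, or every G-layer
meets both components, then |S| > 9δ(G) + 2. -/
theorem stmt15 {α : Type*} [Fintype α] (G : SimpleGraph α) (n : ℕ)
    (hmax : edgeConn G = minDeg G)
    (hm : 5 ≤ Fintype.card α) (hδ : 2 ≤ minDeg G) (hn : 4 ≤ n)
    (S : Set (Sym2 (α × Fin n)))
    (hS : IsKRestrictedEdgeCut (strongProd G (cycleGraph n)) 3 S)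
    (hmin : (S.ncard : ℕ∞) = lamK (strongProd G (cycleGraph n)) 3)
    (D₁ D₂ : ((strongProd G (cycleGraph n)).deleteEdges S).ConnectedComponent)
    (hne : D₁ ≠ D₂) (hall : ∀ c, c = D₁ ∨ c = D₂)
    (h : (∀ x : α, (∃ y, (x, y) ∈ D₁.supp) ∧ (∃ y, (x, y) ∈ D₂.supp)) ∨
         (∀ y : Fin n, (∃ x, (x, y) ∈ D₁.supp) ∧ (∃ x, (x, y) ∈ D₂.supp))) :
    9 * minDeg G + 2 < S.ncard := by
  classical
  haveI : NeZero n := ⟨by omega⟩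
  have hn2 : 2 ≤ n := by omega
  set δ := minDeg G with hδdef
  have hdeg : ∀ v, δ ≤ (G.neighborSet v).ncard := fun v => Nat.sInf_le ⟨v, rfl⟩
  have hbnd : ∀ Y : Set α, Y.Nonempty → Y ≠ Set.univ →
      δ ≤ {p : α × α | G.Adj p.1 p.2 ∧ p.1 ∈ Y ∧ p.2 ∉ Y}.ncard := boundary_ge G hmax
  -- crossing edges lie in S
  have key : ∀ u v : α × Fin n, (strongProd G (cycleGraph n)).Adj u v → (u ∈ D₁.supp ↔ v ∉ D₁.supp) → s(u, v) ∈ S := by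
    intro u v hadj hiff
    by_contra hS'
    have hadj' : ((strongProd G (cycleGraph n)).deleteEdges S).Adj u v := SimpleGraph.deleteEdges_adj.mpr ⟨hadj, hS'⟩
    have hmk := SimpleGraph.ConnectedComponent.sound hadj'.reachable
    by_cases hu : u ∈ D₁.supp
    · have hv : v ∉ D₁.supp := hiff.mp hu
      rw [SimpleGraph.ConnectedComponent.mem_supp_iff] at hu hv
      exact hv (hmk ▸ hu)
    · have hv : v ∈ D₁.supp := not_not.mp (fun hv => hu (hiff.mpr hv))
      rw [SimpleGraph.ConnectedComponent.mem_supp_iff] at hu hv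
      exact hu (hmk.trans hv)
  -- layer sets
  have hproper : ∀ u : α × Fin n, u ∈ D₂.supp → u ∉ D₁.supp := by
    intro u h2 h1
    rw [SimpleGraph.ConnectedComponent.mem_supp_iff] at h1 h2
    exact hne (h1.symm.trans h2)
  set T := S.toFinset with hT
  have hTcard : S.ncard = T.card := Set.ncard_eq_toFinset_card' S
  rw [hTcard]
  rcases h with hcol | hrow
  · -- CASE 1 : every Cₙ-layer (column) meets both components
    set cls : Sym2 (α × Fin n) → Sym2 α := Sym2.map Prod.fst with hcls
    set fib : Sym2 α → Finset (Sym2 (α × Fin n)) :=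
      fun c => T.filter (fun e => cls e = c) with hfib
    have hdiag : ∀ x : α, 2 ≤ (fib s(x, x)).card := by
      intro x
      set Ax := {y : Fin n | (x, y) ∈ D₁.supp} with hAx
      have hne1 : Ax.Nonempty := (hcol x).1
      have hprop : Ax ≠ Set.univ := by
        obtain ⟨y2, hy2⟩ := (hcol x).2
        intro hu
        exact hproper _ hy2 (Set.eq_univ_iff_forall.mp hu y2)
      obtain ⟨y₀, hy₀, hy₀'⟩ := cycle_trans Ax hne1 hprop
      obtain ⟨z₀, hz₀, hz₀'⟩ := cycle_trans Axᶜ (Set.nonempty_compl.mpr hprop)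
        (fun hc => hne1.ne_empty (by rw [← compl_compl Ax, hc, Set.compl_univ]))
      rw [Set.mem_compl_iff] at hz₀
      rw [Set.mem_compl_iff, not_not] at hz₀'
      have he1 : s(((x, y₀) : α × Fin n), (x, y₀ + 1)) ∈ S :=
        key _ _ (Or.inl ⟨rfl, cyc_adj_succ hn2 y₀⟩) (iff_of_true hy₀ hy₀')
      have he2 : s(((x, z₀) : α × Fin n), (x, z₀ + 1)) ∈ S :=
        key _ _ (Or.inl ⟨rfl, cyc_adj_succ hn2 z₀⟩) (iff_of_false hz₀ (not_not_intro hz₀'))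
      have hne12 : s(((x, y₀) : α × Fin n), (x, y₀ + 1)) ≠ s(((x, z₀) : α × Fin n), (x, z₀ + 1)) := by
        intro heq
        rcases Sym2.eq_iff.mp heq with ⟨h1, -⟩ | ⟨h1, h2⟩
        · exact hz₀ ((show y₀ = z₀ from congrArg Prod.snd h1) ▸ hy₀)
        · have e1 : y₀ = z₀ + 1 := congrArg Prod.snd h1
          have e2 : y₀ + 1 = z₀ := congrArg Prod.snd h2
          exact fin_ne_add_two (by omega) y₀ (e1.trans (congrArg (· + 1) e2.symm))
      have hsub : ({s(((x, y₀) : α × Fin n), (x, y₀ + 1)), s(((x, z₀) : α × Fin n), (x, z₀ + 1))} :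
          Finset _) ⊆ fib s(x, x) := by
        intro e he
        rcases Finset.mem_insert.mp he with rfl | he
        · exact Finset.mem_filter.mpr ⟨Set.mem_toFinset.mpr he1, by simp [hcls]⟩
        · rw [Finset.mem_singleton] at he
          subst he
          exact Finset.mem_filter.mpr ⟨Set.mem_toFinset.mpr he2, by simp [hcls]⟩
      calc 2 = ({s(((x, y₀) : α × Fin n), (x, y₀ + 1)), s(((x, z₀) : α × Fin n), (x, z₀ + 1))} :
          Finset _).card := (Finset.card_pair hne12).symm
        _ ≤ _ := Finset.card_le_card hsub
    have hedge : ∀ c ∈ G.edgeFinset, 3 ≤ (fib c).card := by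
      intro c hc
      revert hc
      induction c using Sym2.ind with
      | _ x x' =>
        intro hc
        rw [SimpleGraph.mem_edgeFinset, SimpleGraph.mem_edgeSet] at hc
        have hxx' : x ≠ x' := hc.ne
        set Ax := {y : Fin n | (x, y) ∈ D₁.supp} with hAx
        set Ax' := {y : Fin n | (x', y) ∈ D₁.supp} with hAx'
        have hne1 : Ax.Nonempty := (hcol x).1
        have hprop : Ax ≠ Set.univ := by
          obtain ⟨y2, hy2⟩ := (hcol x).2
          exact fun hu => hproper _ hy2 (Set.eq_univ_iff_forall.mp hu y2)
        have h3 := lemB hn Ax Ax' hne1 hprop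
        set Q := {q : Fin n × Fin n | (q.1 = q.2 ∨ (cycleGraph n).Adj q.1 q.2) ∧
            (q.1 ∈ Ax ↔ q.2 ∉ Ax')} with hQ
        set F : Fin n × Fin n → Sym2 (α × Fin n) := fun q => s((x, q.1), (x', q.2)) with hF
        have hinj : Set.InjOn F Q := by
          rintro ⟨a, b⟩ - ⟨a', b'⟩ - heq
          rcases Sym2.eq_iff.mp heq with ⟨h1, h2⟩ | ⟨h1, -⟩
          · rw [show a = a' from congrArg Prod.snd h1, show b = b' from congrArg Prod.snd h2]
          · exact absurd (congrArg Prod.fst h1) hxx'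
        have himg : F '' Q ⊆ ↑(fib s(x, x')) := by
          rintro - ⟨⟨a, b⟩, ⟨hq1, hq2⟩, rfl⟩
          have hadj : (strongProd G (cycleGraph n)).Adj (x, a) (x', b) := by
            rcases hq1 with heq | hadj
            · exact Or.inr (Or.inl ⟨heq, hc⟩)
            · exact Or.inr (Or.inr ⟨hc, hadj⟩)
          have hmem : s(((x, a) : α × Fin n), (x', b)) ∈ S := key _ _ hadj hq2
          rw [Finset.mem_coe, hfib, Finset.mem_filter]
          exact ⟨Set.mem_toFinset.mpr hmem, by simp [hF, hcls]⟩
        calc 3 ≤ Q.ncard := h3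
          _ = (F '' Q).ncard := (Set.ncard_image_of_injOn hinj).symm
          _ ≤ (↑(fib s(x, x')) : Set _).ncard := Set.ncard_le_ncard himg (Set.toFinite _)
          _ = (fib s(x, x')).card := Set.ncard_coe_finset _
    -- sum up
    set Idiag : Finset (Sym2 α) := Finset.univ.image (fun x : α => s(x, x)) with hIdiag
    have hIdiagcard : Idiag.card = Fintype.card α := by
      rw [hIdiag, Finset.card_image_of_injective _ (fun x y hxy => by
        rcases Sym2.eq_iff.mp hxy with ⟨h1, -⟩ | ⟨h1, -⟩ <;> exact h1), Finset.card_univ]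
    have hdisjIE : Disjoint Idiag G.edgeFinset := by
      rw [Finset.disjoint_left]
      rintro c hc hce
      obtain ⟨x, -, rfl⟩ := Finset.mem_image.mp hc
      rw [SimpleGraph.mem_edgeFinset, SimpleGraph.mem_edgeSet] at hce
      exact G.loopless.irrefl x hce
    have hsum := fiber_sum T cls (Idiag ∪ G.edgeFinset)
    rw [Finset.sum_union hdisjIE] at hsum
    have hsum1 : 2 * Fintype.card α ≤ ∑ c ∈ Idiag, (fib c).card := by
      calc 2 * Fintype.card α = ∑ _c ∈ Idiag, 2 := by
            rw [Finset.sum_const, hIdiagcard, smul_eq_mul, mul_comm]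
        _ ≤ ∑ c ∈ Idiag, (fib c).card := Finset.sum_le_sum (by
            rintro c hc
            obtain ⟨x, -, rfl⟩ := Finset.mem_image.mp hc
            exact hdiag x)
    have hsum2 : 3 * G.edgeFinset.card ≤ ∑ c ∈ G.edgeFinset, (fib c).card := by
      calc 3 * G.edgeFinset.card = ∑ _c ∈ G.edgeFinset, 3 := by
            rw [Finset.sum_const, smul_eq_mul, mul_comm]
        _ ≤ _ := Finset.sum_le_sum hedge
    have hEdeg : Fintype.card α * δ ≤ 2 * G.edgeFinset.card := by
      rw [← SimpleGraph.sum_degrees_eq_twice_card_edges]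
      calc Fintype.card α * δ = ∑ _v : α, δ := by
            rw [Finset.sum_const, Finset.card_univ, smul_eq_mul]
        _ ≤ ∑ v : α, G.degree v := Finset.sum_le_sum (fun v _ => by
            have h1 := hdeg v
            rwa [Set.ncard_eq_toFinset_card', ← SimpleGraph.neighborFinset_def] at h1)
    have hδm : δ < Fintype.card α := by
      have hnea : Nonempty α := Fintype.card_pos_iff.mp (by omega)
      obtain ⟨v, hv⟩ := Nat.sInf_mem (s := {k | ∃ v, deg G v = k})
        ⟨deg G (Classical.arbitrary α), _, rfl⟩
      have h2 : δ = G.degree v := by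
        rw [hδdef, minDeg, ← hv, deg, Set.ncard_eq_toFinset_card', ← SimpleGraph.neighborFinset_def]
        rfl
      rw [h2]
      exact G.degree_lt_card_verts v
    rcases le_or_gt δ 4 with h4 | h5
    · have h15 : 5 * δ ≤ Fintype.card α * δ := Nat.mul_le_mul_right δ hm
      linarith
    · have hδ1 : δ + 1 ≤ Fintype.card α := hδm
      have hmm : (δ + 1) * δ ≤ Fintype.card α * δ := Nat.mul_le_mul_right δ hδ1
      have hexp : δ * δ + δ ≤ Fintype.card α * δ := by
        calc δ * δ + δ = (δ + 1) * δ := by ring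
          _ ≤ _ := hmm
      have h55 : 5 * δ ≤ δ * δ := Nat.mul_le_mul_right δ h5
      linarith
  · -- CASE 2 : every G-layer (row) meets both components
    set cls : Sym2 (α × Fin n) → Sym2 (Fin n) := Sym2.map Prod.snd with hcls
    set fib : Sym2 (Fin n) → Finset (Sym2 (α × Fin n)) :=
      fun c => T.filter (fun e => cls e = c) with hfib
    have hX : ∀ y : Fin n, ({x : α | (x, y) ∈ D₁.supp}).Nonempty ∧
        {x : α | (x, y) ∈ D₁.supp} ≠ Set.univ := by
      intro y
      refine ⟨(hrow y).1, ?_⟩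
      obtain ⟨x2, hx2⟩ := (hrow y).2
      exact fun hu => hproper _ hx2 (Set.eq_univ_iff_forall.mp hu x2)
    have hrowb : ∀ y : Fin n, δ ≤ (fib s(y, y)).card := by
      intro y
      set Xy := {x : α | (x, y) ∈ D₁.supp} with hXy
      set BI := {p : α × α | G.Adj p.1 p.2 ∧ p.1 ∈ Xy ∧ p.2 ∉ Xy} with hBI
      have hb := hbnd Xy (hX y).1 (hX y).2
      set F : α × α → Sym2 (α × Fin n) := fun p => s((p.1, y), (p.2, y)) with hF
      have hinj : Set.InjOn F BI := by
        rintro ⟨a, b⟩ ⟨-, ha, hb'⟩ ⟨a', b'⟩ ⟨-, ha', hb''⟩ heq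
        rcases Sym2.eq_iff.mp heq with ⟨h1, h2⟩ | ⟨h1, h2⟩
        · rw [show a = a' from congrArg Prod.fst h1, show b = b' from congrArg Prod.fst h2]
        · exact absurd ((show a = b' from congrArg Prod.fst h1) ▸ ha) hb''
      have himg : F '' BI ⊆ ↑(fib s(y, y)) := by
        rintro - ⟨⟨a, b⟩, ⟨hadj, ha, hb'⟩, rfl⟩
        have hadj2 : (strongProd G (cycleGraph n)).Adj (a, y) (b, y) := Or.inr (Or.inl ⟨rfl, hadj⟩)
        have hmem : s(((a, y) : α × Fin n), (b, y)) ∈ S :=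
          key _ _ hadj2 (iff_of_true ha hb')
        rw [Finset.mem_coe, hfib, Finset.mem_filter]
        exact ⟨Set.mem_toFinset.mpr hmem, by simp [hF, hcls]⟩
      calc δ ≤ BI.ncard := hb
        _ = (F '' BI).ncard := (Set.ncard_image_of_injOn hinj).symm
        _ ≤ (↑(fib s(y, y)) : Set _).ncard := Set.ncard_le_ncard himg (Set.toFinite _)
        _ = (fib s(y, y)).card := Set.ncard_coe_finset _
    have hgapb : ∀ y : Fin n, 2 * δ ≤ (fib s(y, y + 1)).card := by
      intro y
      set Xy := {x : α | (x, y) ∈ D₁.supp} with hXy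
      set Xy' := {x : α | (x, y + 1) ∈ D₁.supp} with hXy'
      have hP := lemA G δ hdeg hbnd Xy Xy' (hX y).1 (hX (y + 1)).1 (hX y).2 (hX (y + 1)).2
      set P := {p : α × α | (p.1 = p.2 ∨ G.Adj p.1 p.2) ∧ (p.1 ∈ Xy ↔ p.2 ∉ Xy')} with hPdef
      set F : α × α → Sym2 (α × Fin n) := fun p => s((p.1, y), (p.2, y + 1)) with hF
      have hyy1 : y ≠ y + 1 := fin_ne_add_one hn2 y
      have hinj : Set.InjOn F P := by
        rintro ⟨a, b⟩ - ⟨a', b'⟩ - heq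
        rcases Sym2.eq_iff.mp heq with ⟨h1, h2⟩ | ⟨h1, -⟩
        · rw [show a = a' from congrArg Prod.fst h1, show b = b' from congrArg Prod.fst h2]
        · exact absurd (congrArg Prod.snd h1) hyy1
      have himg : F '' P ⊆ ↑(fib s(y, y + 1)) := by
        rintro - ⟨⟨a, b⟩, ⟨hq1, hq2⟩, rfl⟩
        have hadj : (strongProd G (cycleGraph n)).Adj (a, y) (b, y + 1) := by
          rcases hq1 with heq | hadj
          · exact Or.inl ⟨heq, cyc_adj_succ hn2 y⟩
          · exact Or.inr (Or.inr ⟨hadj, cyc_adj_succ hn2 y⟩)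
        have hmem : s(((a, y) : α × Fin n), (b, y + 1)) ∈ S := key _ _ hadj hq2
        rw [Finset.mem_coe, hfib, Finset.mem_filter]
        exact ⟨Set.mem_toFinset.mpr hmem, by simp [hF, hcls]⟩
      calc 2 * δ ≤ P.ncard := hP
        _ = (F '' P).ncard := (Set.ncard_image_of_injOn hinj).symm
        _ ≤ (↑(fib s(y, y + 1)) : Set _).ncard := Set.ncard_le_ncard himg (Set.toFinite _)
        _ = (fib s(y, y + 1)).card := Set.ncard_coe_finset _
    -- sum up
    set Irow : Finset (Sym2 (Fin n)) := Finset.univ.image (fun y : Fin n => s(y, y)) with hIrow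
    set Igap : Finset (Sym2 (Fin n)) := Finset.univ.image (fun y : Fin n => s(y, y + 1)) with hIgap
    have hrinj : Function.Injective (fun y : Fin n => s(y, y)) := fun y z hyz => by
      rcases Sym2.eq_iff.mp hyz with ⟨h1, -⟩ | ⟨h1, -⟩ <;> exact h1
    have hginj : Function.Injective (fun y : Fin n => s(y, y + 1)) := by
      intro y z hyz
      rcases Sym2.eq_iff.mp hyz with ⟨h1, -⟩ | ⟨h1, h2⟩
      · exact h1
      · exact absurd (h2.symm.trans (congrArg (· + 1) h1)) (fin_ne_add_two (by omega) z)
    have hdisjIE : Disjoint Irow Igap := by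
      rw [Finset.disjoint_left]
      rintro c hc hcg
      obtain ⟨y, -, rfl⟩ := Finset.mem_image.mp hc
      obtain ⟨z, -, hz⟩ := Finset.mem_image.mp hcg
      rcases Sym2.eq_iff.mp hz with ⟨h1, h2⟩ | ⟨h1, h2⟩
      · exact fin_ne_add_one hn2 z (h1.trans h2.symm)
      · exact fin_ne_add_one hn2 z (h1.trans h2.symm)
    have hsum := fiber_sum T cls (Irow ∪ Igap)
    rw [Finset.sum_union hdisjIE] at hsum
    have hsum1 : n * δ ≤ ∑ c ∈ Irow, (fib c).card := by
      rw [hIrow, Finset.sum_image (fun a _ b _ hab => hrinj hab)]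
      calc n * δ = ∑ _y : Fin n, δ := by
            rw [Finset.sum_const, Finset.card_univ, Fintype.card_fin, smul_eq_mul]
        _ ≤ _ := Finset.sum_le_sum (fun y _ => hrowb y)
    have hsum2 : n * (2 * δ) ≤ ∑ c ∈ Igap, (fib c).card := by
      rw [hIgap, Finset.sum_image (fun a _ b _ hab => hginj hab)]
      calc n * (2 * δ) = ∑ _y : Fin n, 2 * δ := by
            rw [Finset.sum_const, Finset.card_univ, Fintype.card_fin, smul_eq_mul]
        _ ≤ _ := Finset.sum_le_sum (fun y _ => hgapb y)
    have h4a : 4 * δ ≤ n * δ := Nat.mul_le_mul_right δ hn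
    have h4b : 4 * (2 * δ) ≤ n * (2 * δ) := Nat.mul_le_mul_right (2 * δ) hn
    linarith
end

section
/- Let G and H be connected simple graphs of order m ≥ 3 and n ≥ 3 respectively. If [X, V(G) \ X] is a minimum edge-cut of G (so |[X, V(G)\X]| = λ(G)), then the edge set [X × V(H), (V(G) \ X) × V(H)] in G ⊠ H is a 3-restricted edge-cut of G ⊠ H of size (n + 2e(H))·λ(G). -/
open SimpleGraph

variable {V : Type*}

section MyAux
variable {α β : Type*}

lemma myNcardProd [Fintype α] [Fintype β] (s : Set α) (t : Set β) :
    (s ×ˢ t).ncard = s.ncard * t.ncard := by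
  classical
  rw [Set.ncard_eq_toFinset_card', Set.ncard_eq_toFinset_card' s,
    Set.ncard_eq_toFinset_card' t, Set.toFinset_prod, Finset.card_product]

lemma myBoundaryEqImage (G : SimpleGraph α) (X : Set α) :
    edgeBoundary G X =
      (fun p : α × α => s(p.1, p.2)) '' {p : α × α | p.1 ∈ X ∧ p.2 ∉ X ∧ G.Adj p.1 p.2} := by
  ext e
  constructor
  · rintro ⟨he, u, v, rfl, hu, hv⟩
    exact ⟨(u, v), ⟨hu, hv, (SimpleGraph.mem_edgeSet G).1 he⟩, rfl⟩
  · rintro ⟨⟨u, v⟩, ⟨hu, hv, hadj⟩, rfl⟩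
    exact ⟨(SimpleGraph.mem_edgeSet G).2 hadj, u, v, rfl, hu, hv⟩

lemma myBoundaryNcard (G : SimpleGraph α) (X : Set α) :
    (edgeBoundary G X).ncard = {p : α × α | p.1 ∈ X ∧ p.2 ∉ X ∧ G.Adj p.1 p.2}.ncard := by
  rw [myBoundaryEqImage]
  apply Set.ncard_image_of_injOn
  rintro ⟨a, b⟩ ⟨ha, hb, -⟩ ⟨c, d⟩ ⟨hc, hd, -⟩ h
  simp only [Sym2.eq_iff] at h
  rcases h with ⟨rfl, rfl⟩ | ⟨rfl, rfl⟩
  · rfl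
  · exact absurd ha hd

lemma myAdjPairsNcard [Fintype β] (H : SimpleGraph β) :
    {p : β × β | H.Adj p.1 p.2}.ncard = 2 * numEdges H := by
  classical
  have h1 : {p : β × β | H.Adj p.1 p.2} =
      Set.range (SimpleGraph.Dart.toProd : H.Dart → β × β) := by
    ext ⟨y, z⟩
    constructor
    · intro h; exact ⟨⟨(y, z), h⟩, rfl⟩
    · rintro ⟨⟨⟨y', z'⟩, h⟩, he⟩
      rw [← he]; exact h
  have h2 : numEdges H = H.edgeFinset.card := by
    rw [numEdges, ← Nat.card_coe_set_eq, Nat.card_eq_fintype_card,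
      ← Set.toFinset_card]
    congr 1
  rw [h1, ← Set.image_univ, Set.ncard_image_of_injective _ SimpleGraph.Dart.toProd_injective,
    Set.ncard_univ, Nat.card_eq_fintype_card, SimpleGraph.dart_card_eq_twice_card_edges, h2]

lemma myDiagNcard [Fintype β] : {p : β × β | p.1 = p.2}.ncard = Fintype.card β := by
  have h1 : {p : β × β | p.1 = p.2} = Set.range (fun y : β => (y, y)) := by
    ext ⟨y, z⟩
    constructor
    · rintro h; exact ⟨y, by simp_all⟩
    · rintro ⟨w, hw⟩
      obtain ⟨h1, h2⟩ := Prod.ext_iff.1 hw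
      simp only at h1 h2
      simp only [Set.mem_setOf_eq]
      rw [← h1, ← h2]
  rw [h1, ← Set.image_univ,
    Set.ncard_image_of_injective _ (fun a b h => (Prod.ext_iff.1 h).1),
    Set.ncard_univ, Nat.card_eq_fintype_card]

lemma myT2Ncard [Fintype β] (H : SimpleGraph β) :
    {p : β × β | p.1 = p.2 ∨ H.Adj p.1 p.2}.ncard = Fintype.card β + 2 * numEdges H := by
  have hsplit : {p : β × β | p.1 = p.2 ∨ H.Adj p.1 p.2} =
      {p : β × β | p.1 = p.2} ∪ {p : β × β | H.Adj p.1 p.2} := rfl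
  rw [hsplit, Set.ncard_union_eq (by
    rw [Set.disjoint_left]
    rintro ⟨y, z⟩ h1 h2
    simp only [Set.mem_setOf_eq] at h1 h2
    rw [h1] at h2
    exact H.loopless.irrefl z h2), myDiagNcard, myAdjPairsNcard]

end MyAux

/-- If [X, V(G)\X] is a minimum edge-cut of G, then
[X × V(H), (V(G)\X) × V(H)] is a 3-restricted edge-cut of G ⊠ H of size
(n + 2e(H))λ(G). -/
theorem stmt16 {α β : Type*} [Fintype α] [Fintype β]
    (G : SimpleGraph α) (H : SimpleGraph β)
    (hG : G.Connected) (hH : H.Connected)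
    (hm : 3 ≤ Fintype.card α) (hn : 3 ≤ Fintype.card β)
    (X : Set α) (hcut : IsEdgeCut G (edgeBoundary G X))
    (hmin : (edgeBoundary G X).ncard = edgeConn G) :
    IsKRestrictedEdgeCut (strongProd G H) 3
      (edgeBoundary (strongProd G H) (X ×ˢ (Set.univ : Set β))) ∧
    (edgeBoundary (strongProd G H) (X ×ˢ (Set.univ : Set β))).ncard =
      (Fintype.card β + 2 * numEdges H) * edgeConn G := by

  classical
  set P := strongProd G H with hP
  set S := edgeBoundary P (X ×ˢ (Set.univ : Set β)) with hS
  have hne : Nonempty β := Fintype.card_pos_iff.1 (by omega)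
  obtain ⟨y0⟩ := hne
  -- cross edges lie in S
  have hcross : ∀ u v : α × β, u.1 ∈ X → v.1 ∉ X → P.Adj u v → s(u, v) ∈ S := by
    intro u v hu hv hadj
    exact ⟨(SimpleGraph.mem_edgeSet P).2 hadj, u, v, rfl, ⟨hu, trivial⟩, fun h => hv h.1⟩
  have hkey : ∀ u v : α × β, (P.deleteEdges S).Adj u v → u.1 ∈ X → v.1 ∈ X := by
    intro u v h hu
    rw [SimpleGraph.deleteEdges_adj] at h
    by_contra hv
    exact h.2 (hcross u v hu hv h.1)
  have hreach : ∀ u v : α × β, (P.deleteEdges S).Reachable u v → u.1 ∈ X → v.1 ∈ X := by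
    rintro u v ⟨w⟩
    induction w with
    | nil => exact fun h => h
    | cons h p ih => exact fun hu => ih (hkey _ _ h hu)
  -- layer edges avoid S
  have hlayer : ∀ (x : α) (y z : β), H.Adj y z → (P.deleteEdges S).Adj (x, y) (x, z) := by
    intro x y z hyz
    rw [SimpleGraph.deleteEdges_adj]
    refine ⟨Or.inl ⟨rfl, hyz⟩, ?_⟩
    rintro ⟨-, u, v, heq, hu, hv⟩
    rcases Sym2.eq_iff.1 heq with ⟨rfl, rfl⟩ | ⟨rfl, rfl⟩
    · exact hv ⟨hu.1, trivial⟩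
    · exact hv ⟨hu.1, trivial⟩
  have hreachlayer : ∀ (x : α) (y z : β), (P.deleteEdges S).Reachable (x, y) (x, z) := by
    intro x y z
    obtain ⟨w⟩ := hH.preconnected y z
    induction w with
    | nil => exact SimpleGraph.Reachable.refl _
    | cons h p ih => exact ((hlayer x _ _ h).reachable).trans ih
  -- every component has at least card β ≥ 3 vertices
  have hsupp : ∀ c : (P.deleteEdges S).ConnectedComponent, 3 ≤ c.supp.ncard := by
    intro c
    obtain ⟨⟨x, y⟩, hc⟩ := c.exists_rep
    have hsub : (fun y' : β => (x, y')) '' Set.univ ⊆ c.supp := by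
      rintro ⟨x', y'⟩ ⟨y'', -, heq⟩
      rw [SimpleGraph.ConnectedComponent.mem_supp_iff, ← hc, ← heq]
      exact SimpleGraph.ConnectedComponent.sound (hreachlayer x y'' y)
    have himg : ((fun y' : β => (x, y')) '' Set.univ).ncard = Fintype.card β := by
      rw [Set.ncard_image_of_injective _ (fun a b h => (Prod.ext_iff.1 h).2),
        Set.ncard_univ, Nat.card_eq_fintype_card]
    calc 3 ≤ Fintype.card β := hn
      _ = ((fun y' : β => (x, y')) '' Set.univ).ncard := himg.symm
      _ ≤ c.supp.ncard := Set.ncard_le_ncard hsub (Set.toFinite _)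
  -- disconnectedness
  have hEne : (edgeBoundary G X).Nonempty := by
    by_contra h
    rw [Set.not_nonempty_iff_eq_empty] at h
    apply hcut.2
    rw [h, SimpleGraph.deleteEdges_empty]
    exact hG
  obtain ⟨e, hedge, a, b, rfl, ha, hb⟩ := hEne
  have hdisc : ¬ (P.deleteEdges S).Connected := by
    intro hcon
    exact hb (hreach (a, y0) (b, y0) (hcon.preconnected _ _) ha)
  refine ⟨⟨fun e he => he.1, hdisc, hsupp⟩, ?_⟩
  -- the counting
  rw [myBoundaryNcard]
  have hf : Function.Injective
      (fun p : (α × β) × (α × β) => ((p.1.1, p.2.1), (p.1.2, p.2.2))) := by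
    rintro ⟨⟨a1, y1⟩, ⟨b1, z1⟩⟩ ⟨⟨a2, y2⟩, ⟨b2, z2⟩⟩ h
    simp only [Prod.mk.injEq] at h
    obtain ⟨⟨h1, h2⟩, h3, h4⟩ := h
    subst h1; subst h2; subst h3; subst h4; rfl
  have hseteq : {p : (α × β) × (α × β) | p.1 ∈ X ×ˢ (Set.univ : Set β) ∧
        p.2 ∉ X ×ˢ (Set.univ : Set β) ∧ P.Adj p.1 p.2}
      = (fun p : (α × β) × (α × β) => ((p.1.1, p.2.1), (p.1.2, p.2.2))) ⁻¹'
        (({p : α × α | p.1 ∈ X ∧ p.2 ∉ X ∧ G.Adj p.1 p.2}) ×ˢ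
          ({p : β × β | p.1 = p.2 ∨ H.Adj p.1 p.2})) := by
    ext ⟨⟨a1, y1⟩, ⟨b1, z1⟩⟩
    simp only [Set.mem_setOf_eq, Set.mem_preimage, Set.mem_prod, Set.mem_univ, and_true]
    constructor
    · rintro ⟨ha1, hb1, hadj⟩
      rcases hadj with ⟨h1, h2⟩ | ⟨h1, h2⟩ | ⟨h1, h2⟩
      · obtain rfl : a1 = b1 := h1
        exact absurd ha1 hb1
      · exact ⟨⟨ha1, hb1, h2⟩, Or.inl h1⟩
      · exact ⟨⟨ha1, hb1, h1⟩, Or.inr h2⟩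
    · rintro ⟨⟨ha1, hb1, hGab⟩, hyz⟩
      refine ⟨ha1, hb1, ?_⟩
      rcases hyz with h | h
      · exact Or.inr (Or.inl ⟨h, hGab⟩)
      · exact Or.inr (Or.inr ⟨hGab, h⟩)
  rw [hseteq, Set.ncard_preimage_of_injective_subset_range hf
    (fun q _ => ⟨((q.1.1, q.2.1), (q.1.2, q.2.2)), rfl⟩), myNcardProd,
    myT2Ncard, ← myBoundaryNcard, hmin, Nat.mul_comm]
end

section
/- Let G be a maximally edge-connected simple graph of order m ≥ 3, let n ≥ 4, and let S be a minimum 3-restricted edge-cut of G ⊠ Kₙ with components D₁ and D₂ of (G ⊠ Kₙ) − S. If every vertex x ∈ V(G) satisfies that the Kₙ-layer Kₙ^x intersects both D₁ and D₂, or every vertex y ∈ V(Kₙ) satisfies that the G-layer G^y intersects both D₁ and D₂, then |S| ≥ min{(n − 1)(m + 2e(G)), n²·δ(G)}. -/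
open SimpleGraph

variable {V : Type*}

section Aux
open Finset
attribute [local instance] Classical.propDecidable

variable {α : Type*} [Fintype α]

noncomputable def adjP (G : SimpleGraph α) : Finset (α × α) :=
  univ.filter fun p => G.Adj p.1 p.2

noncomputable def cutP (G : SimpleGraph α) (A : Finset α) : ℕ :=
  (univ.filter fun p : α × α => p.1 ∈ A ∧ p.2 ∉ A ∧ G.Adj p.1 p.2).card

noncomputable def Tfun (G : SimpleGraph α) (n : ℕ) (d : α → ℕ) : ℕ :=
  (∑ x, d x * (n - d x)) + ∑ p ∈ adjP G, d p.1 * (n - d p.2)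

lemma adjSum (G : SimpleGraph α) (f : α → α → ℕ) :
    ∑ p ∈ adjP G, f p.1 p.2 = ∑ x, ∑ z ∈ G.neighborFinset x, f x z := by
  rw [adjP, Finset.sum_filter, Fintype.sum_prod_type]
  refine Finset.sum_congr rfl fun x _ => ?_
  rw [neighborFinset_eq_filter, Finset.sum_filter]

lemma arith0 (n a : ℕ) (ha1 : 1 ≤ a) (han : a < n) : n - 1 ≤ a * (n - a) := by
  obtain ⟨a', rfl⟩ := Nat.exists_eq_add_of_le ha1
  have hb : 1 ≤ n - (1 + a') := by omega
  obtain ⟨b', hb'⟩ := Nat.exists_eq_add_of_le hb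
  rw [hb']
  have : n - 1 = 1 + a' + b' := by omega
  rw [this]
  nlinarith [Nat.zero_le (a' * b')]

lemma arith1 (n a c : ℕ) (ha1 : 1 ≤ a) (han : a < n) (hc1 : 1 ≤ c) (hcn : c < n) :
    2 * (n - 1) ≤ a * (n - c) + c * (n - a) := by
  obtain ⟨a', rfl⟩ := Nat.exists_eq_add_of_le ha1
  obtain ⟨c', rfl⟩ := Nat.exists_eq_add_of_le hc1
  have hu : 1 ≤ n - (1 + c') := by omega
  have hv : 1 ≤ n - (1 + a') := by omega
  obtain ⟨u', hu'⟩ := Nat.exists_eq_add_of_le hu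
  obtain ⟨v', hv'⟩ := Nat.exists_eq_add_of_le hv
  rw [hu', hv']
  have h1 : n - 1 = 1 + c' + u' := by omega
  have hrel : a' + v' = c' + u' := by omega
  rw [h1]
  nlinarith [Nat.zero_le (a' * u'), Nat.zero_le (c' * v'), hrel]

lemma lemQ (c₀ c₁ c₂ n lo hi t B : ℕ) (h1 : lo ≤ t) (h2 : t ≤ hi) (h3 : hi ≤ n)
    (hlo : B ≤ c₀ + (lo * c₁ + (c₂ * (n - lo) + lo * (n - lo))))
    (hhi : B ≤ c₀ + (hi * c₁ + (c₂ * (n - hi) + hi * (n - hi)))) :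
    B ≤ c₀ + (t * c₁ + (c₂ * (n - t) + t * (n - t))) := by
  have hlon : lo ≤ n := le_trans (le_trans h1 h2) h3
  have htn : t ≤ n := le_trans h2 h3
  zify [hlon, htn, h3] at hlo hhi ⊢
  rcases le_total ((c₁ : ℤ) + n) ((c₂ : ℤ) + lo + t) with hc | hc
  · have key : (0:ℤ) ≤ ((hi:ℤ) - t) * ((t:ℤ) + hi - ((c₁:ℤ) - c₂ + n)) := by
      apply mul_nonneg <;> linarith
    nlinarith [key, hhi]
  · have key : (0:ℤ) ≤ ((t:ℤ) - lo) * (((c₁:ℤ) - c₂ + n) - t - lo) := by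
      apply mul_nonneg <;> linarith
    nlinarith [key, hlo]

lemma Tsymm (G : SimpleGraph α) (n : ℕ) (d : α → ℕ) (hdn : ∀ x, d x ≤ n) :
    Tfun G n (fun x => n - d x) = Tfun G n d := by
  rw [Tfun, Tfun]
  congr 1
  · exact Finset.sum_congr rfl fun x _ => by
      rw [Nat.sub_sub_self (hdn x)]; ring
  · refine Finset.sum_nbij' Prod.swap Prod.swap ?_ ?_ ?_ ?_ ?_
    · intro p hp
      simp only [adjP, Finset.mem_filter, Finset.mem_univ, true_and] at hp ⊢
      exact hp.symm
    · intro p hp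
      simp only [adjP, Finset.mem_filter, Finset.mem_univ, true_and] at hp ⊢
      exact hp.symm
    · intro p _; rfl
    · intro p _; rfl
    · intro p _
      simp only [Prod.snd_swap, Prod.fst_swap]
      rw [Nat.sub_sub_self (hdn p.2)]
      ring

lemma lem2 (G : SimpleGraph α) (n δ : ℕ) (Hdeg : ∀ x, δ ≤ (G.neighborFinset x).card)
    (d : α → ℕ) (hdn : ∀ x, d x ≤ n) (hsum : ∑ x, d x = n) :
    n * (n * δ) ≤ Tfun G n d := by
  have key : ∀ x : α, n * δ ≤ (n - d x) + ∑ z ∈ G.neighborFinset x, (n - d z) := by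
    intro x
    have h1 : (∑ z ∈ G.neighborFinset x, (n - d z)) + ∑ z ∈ G.neighborFinset x, d z
        = n * (G.neighborFinset x).card := by
      rw [← Finset.sum_add_distrib,
        Finset.sum_congr rfl fun z _ => Nat.sub_add_cancel (hdn z),
        Finset.sum_const, smul_eq_mul, mul_comm]
    have h2 : (∑ z ∈ G.neighborFinset x, d z) + d x ≤ n := by
      have hx : x ∉ G.neighborFinset x := G.notMem_neighborFinset_self x
      calc (∑ z ∈ G.neighborFinset x, d z) + d x
          = ∑ z ∈ insert x (G.neighborFinset x), d z := by
            rw [Finset.sum_insert hx]; ring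
        _ ≤ ∑ z, d z := Finset.sum_le_sum_of_subset (Finset.subset_univ _)
        _ = n := hsum
    have h3 : n * δ ≤ n * (G.neighborFinset x).card := Nat.mul_le_mul_left n (Hdeg x)
    generalize hQ : n * δ = Q at h3 ⊢
    generalize hP : n * (G.neighborFinset x).card = P at h1 h3
    omega
  have hT : Tfun G n d = ∑ x, d x * ((n - d x) + ∑ z ∈ G.neighborFinset x, (n - d z)) := by
    rw [Tfun, adjSum G (fun a b => d a * (n - d b)), ← Finset.sum_add_distrib]
    exact Finset.sum_congr rfl fun x _ => by rw [Nat.mul_add, Finset.mul_sum]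
  rw [hT]
  calc n * (n * δ) = (∑ x, d x) * (n * δ) := by rw [hsum]
    _ = ∑ x, d x * (n * δ) := by rw [Finset.sum_mul]
    _ ≤ _ := Finset.sum_le_sum fun x _ => Nat.mul_le_mul_left (d x) (key x)

lemma Tupdate (G : SimpleGraph α) (n : ℕ) (d : α → ℕ) (x₀ : α) (t : ℕ) :
    Tfun G n (Function.update d x₀ t)
      = ((∑ x ∈ univ.erase x₀, d x * (n - d x))
          + ∑ x ∈ univ.erase x₀, ∑ z ∈ (G.neighborFinset x).erase x₀, d x * (n - d z))
        + (t * (∑ z ∈ G.neighborFinset x₀, (n - d z))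
          + ((∑ x ∈ G.neighborFinset x₀, d x) * (n - t) + t * (n - t))) := by
  set D := Function.update d x₀ t with hD
  have hDx₀ : D x₀ = t := Function.update_self x₀ t d
  have hDne : ∀ x, x ≠ x₀ → D x = d x := fun x hx => Function.update_of_ne hx t d
  have hdiag : ∑ x, D x * (n - D x)
      = (∑ x ∈ univ.erase x₀, d x * (n - d x)) + t * (n - t) := by
    rw [← Finset.sum_erase_add univ _ (mem_univ x₀), hDx₀]
    congr 1
    exact Finset.sum_congr rfl fun x hx => by
      rw [hDne x (Finset.ne_of_mem_erase hx)]
  have hx₀term : ∑ z ∈ G.neighborFinset x₀, D x₀ * (n - D z)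
      = t * ∑ z ∈ G.neighborFinset x₀, (n - d z) := by
    rw [hDx₀, Finset.mul_sum]
    refine Finset.sum_congr rfl fun z hz => ?_
    rw [hDne z ((G.mem_neighborFinset x₀ z).1 hz).ne']
  have hrest : ∀ x ∈ univ.erase x₀, ∑ z ∈ G.neighborFinset x, D x * (n - D z)
      = (∑ z ∈ (G.neighborFinset x).erase x₀, d x * (n - d z))
        + (if x₀ ∈ G.neighborFinset x then d x * (n - t) else 0) := by
    intro x hx
    have hxne := Finset.ne_of_mem_erase hx
    have hDx : D x = d x := hDne x hxne
    by_cases hmem : x₀ ∈ G.neighborFinset x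
    · rw [if_pos hmem, ← Finset.sum_erase_add _ _ hmem, hDx, hDx₀]
      congr 1
      exact Finset.sum_congr rfl fun z hz => by
        rw [hDne z (Finset.ne_of_mem_erase hz)]
    · rw [if_neg hmem, Finset.erase_eq_of_notMem hmem, add_zero]
      refine Finset.sum_congr rfl fun z hz => ?_
      rw [hDx, hDne z (fun h => hmem (h ▸ hz))]
  have hoff : ∑ x, ∑ z ∈ G.neighborFinset x, D x * (n - D z)
      = (∑ x ∈ univ.erase x₀, ∑ z ∈ (G.neighborFinset x).erase x₀, d x * (n - d z))
        + ((∑ x ∈ G.neighborFinset x₀, d x) * (n - t)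
          + t * ∑ z ∈ G.neighborFinset x₀, (n - d z)) := by
    rw [← Finset.sum_erase_add univ _ (mem_univ x₀), hx₀term,
      Finset.sum_congr rfl hrest, Finset.sum_add_distrib]
    have hset : (univ.erase x₀).filter (fun x => x₀ ∈ G.neighborFinset x)
        = G.neighborFinset x₀ := by
      ext a
      simp only [Finset.mem_filter, Finset.mem_erase, Finset.mem_univ, and_true,
        SimpleGraph.mem_neighborFinset, true_and]
      constructor
      · rintro ⟨-, h⟩; exact h.symm
      · intro h; exact ⟨h.ne', h.symm⟩
    have hite : ∑ x ∈ univ.erase x₀, (if x₀ ∈ G.neighborFinset x then d x * (n - t) else 0)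
        = (∑ x ∈ G.neighborFinset x₀, d x) * (n - t) := by
      rw [← Finset.sum_filter, hset, Finset.sum_mul]
    rw [hite]
    ring
  rw [Tfun, adjSum G (fun a b => D a * (n - D b)), hdiag, hoff]
  ring

lemma lem0 (G : SimpleGraph α) (n δ : ℕ) (hn : 1 ≤ n)
    (HC : ∀ A : Finset α, A.Nonempty → A ≠ univ → δ ≤ cutP G A)
    (d : α → ℕ) (hpure : ∀ x, d x = 0 ∨ d x = n)
    (h1 : n ≤ ∑ x, d x) (h2 : n ≤ ∑ x, (n - d x)) :
    n * (n * δ) ≤ Tfun G n d := by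
  set A := univ.filter (fun x => d x = n) with hA
  have hAne : A.Nonempty := by
    rw [Finset.nonempty_iff_ne_empty]
    intro h
    have hz : ∀ x, d x = 0 := by
      intro x
      rcases hpure x with h0 | hn'
      · exact h0
      · exact absurd (h ▸ (Finset.mem_filter.2 ⟨Finset.mem_univ x, hn'⟩ : x ∈ A)) (Finset.notMem_empty x)
    have : ∑ x, d x = 0 := Finset.sum_eq_zero fun x _ => hz x
    omega
  have hAuniv : A ≠ univ := by
    intro h
    have hz : ∀ x : α, n - d x = 0 := by
      intro x
      have : x ∈ A := h ▸ Finset.mem_univ x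
      rw [(Finset.mem_filter.1 this).2]
      omega
    have : ∑ x, (n - d x) = 0 := Finset.sum_eq_zero fun x _ => hz x
    omega
  set F := univ.filter fun p : α × α => p.1 ∈ A ∧ p.2 ∉ A ∧ G.Adj p.1 p.2 with hF
  have hsub : F ⊆ adjP G := by
    intro p hp
    simp only [hF, adjP, Finset.mem_filter, Finset.mem_univ, true_and] at hp ⊢
    exact hp.2.2
  have hbound : ∀ p ∈ F, n * n ≤ d p.1 * (n - d p.2) := by
    intro p hp
    simp only [hF, Finset.mem_filter, Finset.mem_univ, true_and] at hp
    obtain ⟨h1', h2', -⟩ := hp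
    have hd1 : d p.1 = n := (Finset.mem_filter.1 h1').2
    have hd2 : d p.2 = 0 := by
      rcases hpure p.2 with h | h
      · exact h
      · exact absurd (show p.2 ∈ A from Finset.mem_filter.2 ⟨Finset.mem_univ p.2, h⟩) h2'
    rw [hd1, hd2, Nat.sub_zero]
  calc n * (n * δ) = (n * n) * δ := by ring
    _ ≤ (n * n) * cutP G A := Nat.mul_le_mul_left _ (HC A hAne hAuniv)
    _ = ∑ _p ∈ F, n * n := by rw [Finset.sum_const, smul_eq_mul, cutP, ← hF]; ring
    _ ≤ ∑ p ∈ F, d p.1 * (n - d p.2) := Finset.sum_le_sum hbound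
    _ ≤ ∑ p ∈ adjP G, d p.1 * (n - d p.2) := Finset.sum_le_sum_of_subset hsub
    _ ≤ Tfun G n d := Nat.le_add_left _ _

lemma cut_ge (G : SimpleGraph α) (hmax : edgeConn G = minDeg G)
    (A : Finset α) (hne : A.Nonempty) (hproper : A ≠ univ) : minDeg G ≤ cutP G A := by
  obtain ⟨a, ha⟩ := hne
  obtain ⟨b, hb⟩ : ∃ b, b ∉ A := by
    by_contra h
    push_neg at h
    exact hproper (Finset.eq_univ_iff_forall.2 h)
  set B : Set (Sym2 α) := edgeBoundary G (↑A : Set α) with hB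
  have hwalk : ∀ {u v : α}, (G.deleteEdges B).Walk u v → u ∈ A → v ∈ A := by
    intro u v w
    induction w with
    | nil => exact id
    | @cons u' w' v' h p ih =>
      intro hu
      rw [SimpleGraph.deleteEdges_adj] at h
      apply ih
      by_contra hw
      exact h.2 ⟨(SimpleGraph.mem_edgeSet G).2 h.1, u', w', rfl,
        Finset.mem_coe.2 hu, fun hc => hw (Finset.mem_coe.1 hc)⟩
  have hcut : IsEdgeCut G B := by
    refine ⟨fun e he => he.1, ?_⟩
    intro hc
    obtain ⟨w⟩ := hc.preconnected a b
    exact hb (hwalk w ha)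
  have h1 : edgeConn G ≤ B.ncard := Nat.sInf_le ⟨B, hcut, rfl⟩
  have h2 : B.ncard = cutP G A := by
    rw [Set.ncard_eq_toFinset_card B (Set.toFinite B), cutP]
    symm
    apply Finset.card_nbij (fun p => s(p.1, p.2))
    · intro p hp
      simp only [Finset.mem_coe, Finset.mem_filter, Finset.mem_univ, true_and] at hp
      simp only [Finset.mem_coe, Set.Finite.mem_toFinset]
      exact ⟨(SimpleGraph.mem_edgeSet G).2 hp.2.2, p.1, p.2, rfl,
        Finset.mem_coe.2 hp.1, fun hc => hp.2.1 (Finset.mem_coe.1 hc)⟩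
    · intro p hp q hq heq
      simp only [Finset.coe_filter, Set.mem_setOf_eq, Finset.mem_univ, true_and] at hp hq
      rcases Sym2.eq_iff.1 heq with ⟨e1, e2⟩ | ⟨e1, e2⟩
      · exact Prod.ext e1 e2
      · exact absurd (e1 ▸ hp.1) hq.2.1
    · intro e he
      simp only [Set.Finite.coe_toFinset] at he
      obtain ⟨heE, u, v, rfl, hu, hv⟩ := he
      refine ⟨(u, v), ?_, rfl⟩
      simp only [Finset.coe_filter, Set.mem_setOf_eq, Finset.mem_univ, true_and]
      exact ⟨Finset.mem_coe.1 hu, fun hc => hv (Finset.mem_coe.2 hc),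
        (SimpleGraph.mem_edgeSet G).1 heE⟩
  rw [hmax] at h1
  exact h1.trans (le_of_eq h2)

lemma MAIN (G : SimpleGraph α) (n δ : ℕ) (hn : 1 ≤ n)
    (HC : ∀ A : Finset α, A.Nonempty → A ≠ univ → δ ≤ cutP G A)
    (Hdeg : ∀ x, δ ≤ (G.neighborFinset x).card) :
    ∀ k (d : α → ℕ), (univ.filter fun x => d x ≠ 0 ∧ d x ≠ n).card = k →
      (∀ x, d x ≤ n) → n ≤ ∑ x, d x → n ≤ ∑ x, (n - d x) →
      n * (n * δ) ≤ Tfun G n d := by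
  intro k
  induction k using Nat.strong_induction_on with
  | _ k IH =>
  intro d hk hdn hs1 hs2
  rcases Finset.eq_empty_or_nonempty (univ.filter fun x => d x ≠ 0 ∧ d x ≠ n) with he | hne
  · refine lem0 G n δ hn HC d ?_ hs1 hs2
    intro x
    by_contra hx
    push_neg at hx
    exact absurd (he ▸ (Finset.mem_filter.2 ⟨Finset.mem_univ x, hx⟩ :
      x ∈ univ.filter fun x => d x ≠ 0 ∧ d x ≠ n)) (Finset.notMem_empty x)
  · obtain ⟨x₀, hx₀⟩ := hne
    set rest := ∑ x ∈ univ.erase x₀, d x with hrest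
    set rest2 := ∑ x ∈ univ.erase x₀, (n - d x) with hrest2
    have hsplit1 : rest + d x₀ = ∑ x, d x := Finset.sum_erase_add univ d (Finset.mem_univ x₀)
    have hsplit2 : rest2 + (n - d x₀) = ∑ x, (n - d x) :=
      Finset.sum_erase_add univ _ (Finset.mem_univ x₀)
    have hdx0n : d x₀ ≤ n := hdn x₀
    have hfull' : (rest + d x₀) + (rest2 + (n - d x₀)) = n * Fintype.card α := by
      rw [hsplit1, hsplit2, ← Finset.sum_add_distrib,
        Finset.sum_congr rfl fun x _ => Nat.add_sub_cancel' (hdn x),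
        Finset.sum_const, smul_eq_mul, mul_comm, Finset.card_univ]
    obtain ⟨NM, hNMdef⟩ : ∃ N, n * Fintype.card α = N := ⟨_, rfl⟩
    rw [hNMdef] at hfull'
    have hkey1 : n ≤ rest + d x₀ := hsplit1 ▸ hs1
    have hkey2 : n ≤ rest2 + (n - d x₀) := hsplit2 ▸ hs2
    set lo := n - rest with hlo
    set hi := min n (NM - n - rest) with hhi
    have hhiC : hi = n ∨ hi = NM - n - rest := by
      rcases le_total n (NM - n - rest) with hc | hc
      · left; rw [hhi, min_eq_left hc]
      · right; rw [hhi, min_eq_right hc]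
    have hhi_len : hi ≤ n := min_le_left _ _
    have hhi_r : hi ≤ NM - n - rest := min_le_right _ _
    have hlo_le : lo ≤ d x₀ := by omega
    have hhi_ge : d x₀ ≤ hi := le_min hdx0n (by omega)
    have hupds : ∀ v, ∑ x, Function.update d x₀ v x = rest + v := by
      intro v
      rw [← Finset.sum_erase_add univ _ (Finset.mem_univ x₀), Function.update_self]
      congr 1
      exact Finset.sum_congr rfl fun x hx => by
        rw [Function.update_of_ne (Finset.ne_of_mem_erase hx)]
    have hupds2 : ∀ v, ∑ x, (n - Function.update d x₀ v x) = rest2 + (n - v) := by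
      intro v
      rw [← Finset.sum_erase_add univ _ (Finset.mem_univ x₀), Function.update_self]
      congr 1
      exact Finset.sum_congr rfl fun x hx => by
        rw [Function.update_of_ne (Finset.ne_of_mem_erase hx)]
    have hupdn : ∀ v, v ≤ n → ∀ x, Function.update d x₀ v x ≤ n := by
      intro v hv x
      by_cases hx : x = x₀
      · subst hx; rw [Function.update_self]; exact hv
      · rw [Function.update_of_ne hx]; exact hdn x
    have hcard_lt : ∀ v, v = 0 ∨ v = n →
        ((univ.filter fun x =>
          Function.update d x₀ v x ≠ 0 ∧ Function.update d x₀ v x ≠ n).card) = k - 1 := by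
      intro v hv
      have hfilter : (univ.filter fun x =>
          Function.update d x₀ v x ≠ 0 ∧ Function.update d x₀ v x ≠ n)
            = (univ.filter fun x => d x ≠ 0 ∧ d x ≠ n).erase x₀ := by
        ext a
        by_cases ha : a = x₀
        · subst ha
          simp only [Finset.mem_filter, Finset.mem_erase, Function.update_self]
          rcases hv with h | h <;> subst h <;> simp
        · simp only [Finset.mem_filter, Finset.mem_erase, Finset.mem_univ, true_and,
            Function.update_of_ne ha, ha, not_false_iff, true_and]
          exact ⟨fun h => ⟨ha, h⟩, fun h => h.2⟩
      rw [hfilter, Finset.card_erase_of_mem hx₀, hk]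
    have hk1 : 1 ≤ k := by
      rw [← hk]
      exact Finset.card_pos.2 ⟨x₀, hx₀⟩
    have hBlo : n * (n * δ) ≤ Tfun G n (Function.update d x₀ lo) := by
      rcases Nat.eq_zero_or_pos lo with h0 | hpos
      · refine IH (k-1) (by omega) _ (h0 ▸ hcard_lt 0 (Or.inl rfl)) (hupdn lo (by omega)) ?_ ?_
        · rw [hupds]; omega
        · rw [hupds2]; omega
      · refine lem2 G n δ Hdeg _ (hupdn lo (by omega)) ?_
        rw [hupds]; omega
    have hBhi : n * (n * δ) ≤ Tfun G n (Function.update d x₀ hi) := by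
      by_cases hhin : hi = n
      · refine IH (k-1) (by omega) _ (hhin ▸ hcard_lt n (Or.inr rfl)) (hupdn hi hhi_len) ?_ ?_
        · rw [hupds]; omega
        · rw [hupds2]; omega
      · have hhieq : hi = NM - n - rest := by omega
        have hsym : Tfun G n (fun x => n - Function.update d x₀ hi x)
            = Tfun G n (Function.update d x₀ hi) := Tsymm G n _ (hupdn hi hhi_len)
        rw [← hsym]
        refine lem2 G n δ Hdeg _ (fun x => Nat.sub_le n _) ?_
        rw [hupds2]; omega
    have hgoal : Tfun G n d = Tfun G n (Function.update d x₀ (d x₀)) := by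
      rw [Function.update_eq_self]
    rw [hgoal, Tupdate]
    rw [Tupdate] at hBlo hBhi
    exact lemQ _ _ _ n lo hi (d x₀) _ hlo_le hhi_ge hhi_len hBlo hBhi

end Aux

/-- Let G be maximally edge-connected of order m ≥ 3, n ≥ 4 and
S a minimum 3-restricted edge-cut of G ⊠ Kₙ with the two components D₁, D₂.
If every Kₙ-layer meets both components, or every G-layer meets both
components, then |S| ≥ min{(n-1)(m + 2e(G)), n²δ(G)}. -/
theorem stmt17 {α : Type*} [Fintype α] (G : SimpleGraph α) (n : ℕ)
    (hmax : edgeConn G = minDeg G)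
    (hm : 3 ≤ Fintype.card α) (hn : 4 ≤ n)
    (S : Set (Sym2 (α × Fin n)))
    (hS : IsKRestrictedEdgeCut (strongProd G (completeGraph (Fin n))) 3 S)
    (hmin : (S.ncard : ℕ∞) = lamK (strongProd G (completeGraph (Fin n))) 3)
    (D₁ D₂ : ((strongProd G (completeGraph (Fin n))).deleteEdges S).ConnectedComponent)
    (hne : D₁ ≠ D₂) (hall : ∀ c, c = D₁ ∨ c = D₂)
    (h : (∀ x : α, (∃ y, (x, y) ∈ D₁.supp) ∧ (∃ y, (x, y) ∈ D₂.supp)) ∨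
         (∀ y : Fin n, (∃ x, (x, y) ∈ D₁.supp) ∧ (∃ x, (x, y) ∈ D₂.supp))) :
    min ((n - 1) * (Fintype.card α + 2 * numEdges G)) (n ^ 2 * minDeg G) ≤
      S.ncard := by
  classical
  -- basic component facts
  have hdisj : ∀ v, v ∈ D₁.supp → v ∈ D₂.supp → False := by
    intro v h1 h2
    rw [SimpleGraph.ConnectedComponent.mem_supp_iff] at h1 h2
    exact hne (by rw [← h1, ← h2])
  have hcover : ∀ v, v ∈ D₁.supp ∨ v ∈ D₂.supp := by
    intro v
    rcases hall (((strongProd G (completeGraph (Fin n))).deleteEdges S).connectedComponentMk v)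
      with hc | hc
    · left; exact (SimpleGraph.ConnectedComponent.mem_supp_iff _ _).2 hc
    · right; exact (SimpleGraph.ConnectedComponent.mem_supp_iff _ _).2 hc
  have hcross : ∀ u v, u ∈ D₁.supp → v ∈ D₂.supp →
      (strongProd G (completeGraph (Fin n))).Adj u v → s(u, v) ∈ S := by
    intro u v h1 h2 hadj
    by_contra hns
    have hAdj' : ((strongProd G (completeGraph (Fin n))).deleteEdges S).Adj u v :=
      SimpleGraph.deleteEdges_adj.2 ⟨hadj, hns⟩
    have hmk := SimpleGraph.ConnectedComponent.sound hAdj'.reachable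
    rw [SimpleGraph.ConnectedComponent.mem_supp_iff] at h1 h2
    exact hne (by rw [← h1, ← h2, hmk])
  -- column counts
  set d1 : α → ℕ := fun x => (Finset.univ.filter fun y : Fin n => (x, y) ∈ D₁.supp).card
    with hd1def
  have hd1n : ∀ x, d1 x ≤ n := by
    intro x
    calc d1 x ≤ (Finset.univ : Finset (Fin n)).card := Finset.card_filter_le _ _
      _ = n := by simp
  have hd2 : ∀ x, (Finset.univ.filter fun y : Fin n => (x, y) ∈ D₂.supp).card = n - d1 x := by
    intro x
    have hsplit := Finset.card_filter_add_card_filter_not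
      (s := (Finset.univ : Finset (Fin n))) (p := fun y => (x, y) ∈ D₁.supp)
    have hcongr : (Finset.univ.filter fun y : Fin n => ¬ (x, y) ∈ D₁.supp)
        = (Finset.univ.filter fun y : Fin n => (x, y) ∈ D₂.supp) := by
      ext y
      simp only [Finset.mem_filter, Finset.mem_univ, true_and]
      constructor
      · intro hy
        rcases hcover (x, y) with h' | h'
        · exact absurd h' hy
        · exact h'
      · intro hy hy'
        exact hdisj _ hy' hy
    rw [hcongr] at hsplit
    have hED : (Finset.univ.filter fun y : Fin n => (x, y) ∈ D₁.supp).card = d1 x := rfl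
    rw [hED] at hsplit
    have hcardn : (Finset.univ : Finset (Fin n)).card = n := by simp
    omega
  -- the crossing-pairs finset
  set Φ : Finset ((α × Fin n) × (α × Fin n)) :=
    Finset.univ.filter (fun p => p.1 ∈ D₁.supp ∧ p.2 ∈ D₂.supp ∧
      (strongProd G (completeGraph (Fin n))).Adj p.1 p.2) with hPhidef
  have hSfin : S.Finite := Set.toFinite S
  have hPhiS : Φ.card ≤ S.ncard := by
    rw [Set.ncard_eq_toFinset_card S hSfin]
    apply Finset.card_le_card_of_injOn (fun p => s(p.1, p.2))
    · intro p hp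
      simp only [hPhidef, Finset.mem_coe, Finset.mem_filter, Finset.mem_univ, true_and] at hp
      simp only [Finset.mem_coe, Set.Finite.mem_toFinset]
      exact hcross _ _ hp.1 hp.2.1 hp.2.2
    · intro p hp q hq heq
      simp only [hPhidef, Finset.coe_filter, Set.mem_setOf_eq, Finset.mem_univ, true_and]
        at hp hq
      rcases Sym2.eq_iff.1 heq with ⟨e1, e2⟩ | ⟨e1, e2⟩
      · exact Prod.ext e1 e2
      · exact (hdisj p.1 hp.1 (e1 ▸ hq.2.1)).elim
  have hfiber : ∀ x z : α, (x = z ∨ G.Adj x z) →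
      (Φ.filter fun p => (p.1.1, p.2.1) = (x, z)).card = d1 x * (n - d1 z) := by
    intro x z hxz
    have hprod : ((Finset.univ.filter fun y : Fin n => (x, y) ∈ D₁.supp) ×ˢ
        (Finset.univ.filter fun y : Fin n => (z, y) ∈ D₂.supp)).card = d1 x * (n - d1 z) := by
      rw [Finset.card_product, hd2 z]
    rw [← hprod]
    apply Finset.card_nbij (fun p => (p.1.2, p.2.2))
    · intro p hp
      simp only [hPhidef, Finset.mem_coe, Finset.mem_filter, Finset.mem_univ, true_and,
        Prod.mk.injEq] at hp
      obtain ⟨⟨hp1, hp2, -⟩, hpx, hpz⟩ := hp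
      have e1 : (x, p.1.2) = p.1 := by rw [← hpx]
      have e2 : (z, p.2.2) = p.2 := by rw [← hpz]
      refine Finset.mem_product.2 ⟨?_, ?_⟩
      · refine Finset.mem_filter.2 ⟨Finset.mem_univ _, ?_⟩
        rw [e1]; exact hp1
      · refine Finset.mem_filter.2 ⟨Finset.mem_univ _, ?_⟩
        rw [e2]; exact hp2
    · intro p hp q hq he
      simp only [hPhidef, Finset.mem_coe, Finset.mem_filter, Finset.mem_univ, true_and,
        Prod.mk.injEq] at hp hq
      obtain ⟨-, hpx, hpz⟩ := hp
      obtain ⟨-, hqx, hqz⟩ := hq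
      have he' : (p.1.2, p.2.2) = (q.1.2, q.2.2) := he
      rw [Prod.mk.injEq] at he'
      have f1 : p.1 = q.1 := Prod.ext (by rw [hpx, hqx]) he'.1
      have f2 : p.2 = q.2 := Prod.ext (by rw [hpz, hqz]) he'.2
      exact Prod.ext f1 f2
    · intro b hb
      simp only [Finset.coe_product, Set.mem_prod, Finset.mem_coe, Finset.mem_filter,
        Finset.mem_univ, true_and] at hb
      obtain ⟨hb1, hb2⟩ := hb
      have hadj : (strongProd G (completeGraph (Fin n))).Adj (x, b.1) (z, b.2) := by
        rcases hxz with rfl | hxz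
        · have hne' : b.1 ≠ b.2 := by
            intro hyy
            exact hdisj (x, b.1) hb1 (by rw [hyy]; exact hb2)
          exact Or.inl ⟨rfl, hne'⟩
        · by_cases hyy : b.1 = b.2
          · exact Or.inr (Or.inl ⟨hyy, hxz⟩)
          · exact Or.inr (Or.inr ⟨hxz, hyy⟩)
      refine ⟨((x, b.1), (z, b.2)), ?_, rfl⟩
      exact Finset.mem_coe.2 (Finset.mem_filter.2
        ⟨Finset.mem_filter.2 ⟨Finset.mem_univ _, hb1, hb2, hadj⟩, rfl⟩)
  have hTT : Tfun G n d1 ≤ Φ.card := by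
    rw [Finset.card_eq_sum_card_fiberwise
      (f := fun p : (α × Fin n) × (α × Fin n) => (p.1.1, p.2.1))
      (t := Finset.univ) (fun p _ => Finset.mem_univ _)]
    have hdisj2 : Disjoint (Finset.univ.filter fun q : α × α => q.1 = q.2) (adjP G) := by
      rw [Finset.disjoint_left]
      intro q hq1 hq2
      simp only [adjP, Finset.mem_filter, Finset.mem_univ, true_and] at hq1 hq2
      rw [hq1] at hq2
      exact G.loopless.irrefl q.2 hq2
    have hdiagsum : ∑ x, d1 x * (n - d1 x)
        = ∑ q ∈ Finset.univ.filter (fun q : α × α => q.1 = q.2),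
            (Φ.filter fun p => (p.1.1, p.2.1) = q).card := by
      refine Finset.sum_nbij' (fun x => (x, x)) (fun q => q.1) ?_ ?_ ?_ ?_ ?_
      · intro x _
        simp
      · intro q _
        exact Finset.mem_univ _
      · intro x _
        rfl
      · intro q hq
        simp only [Finset.mem_filter] at hq
        exact Prod.ext rfl hq.2
      · intro x _
        exact (hfiber x x (Or.inl rfl)).symm
    have hadjsum : ∑ p ∈ adjP G, d1 p.1 * (n - d1 p.2)
        = ∑ q ∈ adjP G, (Φ.filter fun p => (p.1.1, p.2.1) = q).card := by
      refine Finset.sum_congr rfl fun q hq => ?_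
      simp only [adjP, Finset.mem_filter, Finset.mem_univ, true_and] at hq
      exact (hfiber q.1 q.2 (Or.inr hq)).symm
    rw [Tfun, hdiagsum, hadjsum, ← Finset.sum_union hdisj2]
    exact Finset.sum_le_sum_of_subset (Finset.subset_univ _)
  have hkey : Tfun G n d1 ≤ S.ncard := le_trans hTT hPhiS
  by_cases hmix : ∀ x, d1 x ≠ 0 ∧ d1 x ≠ n
  · -- every Kₙ-layer is mixed: first bound
    refine le_trans (min_le_left _ _) ?_
    have hdiag : Fintype.card α * (n - 1) ≤ ∑ x, d1 x * (n - d1 x) := by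
      calc Fintype.card α * (n - 1) = ∑ _x : α, (n - 1) := by
            rw [Finset.sum_const, smul_eq_mul, Finset.card_univ]
        _ ≤ _ := Finset.sum_le_sum fun x _ => arith0 n (d1 x)
              (by have := (hmix x).1; omega)
              (by have := (hmix x).2; have := hd1n x; omega)
    have hswap : ∑ p ∈ adjP G, d1 p.1 * (n - d1 p.2)
        = ∑ p ∈ adjP G, d1 p.2 * (n - d1 p.1) := by
      refine Finset.sum_nbij' Prod.swap Prod.swap ?_ ?_ ?_ ?_ ?_
      · intro p hp
        simp only [adjP, Finset.mem_filter, Finset.mem_univ, true_and] at hp ⊢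
        exact hp.symm
      · intro p hp
        simp only [adjP, Finset.mem_filter, Finset.mem_univ, true_and] at hp ⊢
        exact hp.symm
      · intro p _; rfl
      · intro p _; rfl
      · intro p _; rfl
    have hineq : ∀ p ∈ adjP G,
        2 * (n - 1) ≤ d1 p.1 * (n - d1 p.2) + d1 p.2 * (n - d1 p.1) := by
      intro p _
      exact arith1 n (d1 p.1) (d1 p.2)
        (by have := (hmix p.1).1; omega)
        (by have := (hmix p.1).2; have := hd1n p.1; omega)
        (by have := (hmix p.2).1; omega)
        (by have := (hmix p.2).2; have := hd1n p.2; omega)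
    have hcross2 : (adjP G).card * (2 * (n - 1))
        ≤ 2 * ∑ p ∈ adjP G, d1 p.1 * (n - d1 p.2) := by
      calc (adjP G).card * (2 * (n - 1)) = ∑ _p ∈ adjP G, 2 * (n - 1) := by
            rw [Finset.sum_const, smul_eq_mul]
        _ ≤ ∑ p ∈ adjP G, (d1 p.1 * (n - d1 p.2) + d1 p.2 * (n - d1 p.1)) :=
            Finset.sum_le_sum hineq
        _ = (∑ p ∈ adjP G, d1 p.1 * (n - d1 p.2))
            + ∑ p ∈ adjP G, d1 p.2 * (n - d1 p.1) := Finset.sum_add_distrib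
        _ = 2 * ∑ p ∈ adjP G, d1 p.1 * (n - d1 p.2) := by rw [← hswap]; ring
    have hadjcard : (adjP G).card = 2 * numEdges G := by
      have h1 : numEdges G = G.edgeFinset.card := by
        rw [numEdges, ← SimpleGraph.coe_edgeFinset, Set.ncard_coe_finset]
      have h2 := SimpleGraph.two_mul_card_edgeFinset (G := G)
      have h3 : (Finset.univ.filter (fun x : α × α => match x with | (x, y) => G.Adj x y))
          = adjP G := by
        ext ⟨a, b⟩
        simp [adjP]
      rw [h3] at h2
      rw [h1, ← h2]
    have hcross3 : (2 * numEdges G) * (n - 1) ≤ ∑ p ∈ adjP G, d1 p.1 * (n - d1 p.2) := by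
      rw [← hadjcard]
      have h4 : 2 * ((adjP G).card * (n - 1))
          ≤ 2 * ∑ p ∈ adjP G, d1 p.1 * (n - d1 p.2) := by
        calc 2 * ((adjP G).card * (n - 1)) = (adjP G).card * (2 * (n - 1)) := by ring
          _ ≤ _ := hcross2
      exact Nat.le_of_mul_le_mul_left h4 (by norm_num)
    have hfin : (n - 1) * (Fintype.card α + 2 * numEdges G)
        = Fintype.card α * (n - 1) + (2 * numEdges G) * (n - 1) := by ring
    rw [hfin]
    calc Fintype.card α * (n - 1) + (2 * numEdges G) * (n - 1)
        ≤ (∑ x, d1 x * (n - d1 x)) + ∑ p ∈ adjP G, d1 p.1 * (n - d1 p.2) :=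
          add_le_add hdiag hcross3
      _ = Tfun G n d1 := rfl
      _ ≤ S.ncard := hkey
  · -- some Kₙ-layer is pure: second bound
    push_neg at hmix
    obtain ⟨x₀, hx₀⟩ := hmix
    have hrows : ∀ y : Fin n, (∃ x, (x, y) ∈ D₁.supp) ∧ (∃ x, (x, y) ∈ D₂.supp) := by
      rcases h with hcols | hr
      · exfalso
        obtain ⟨⟨y1, hy1⟩, ⟨y2, hy2⟩⟩ := hcols x₀
        have h1 : 0 < d1 x₀ := Finset.card_pos.2
          ⟨y1, Finset.mem_filter.2 ⟨Finset.mem_univ _, hy1⟩⟩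
        have h2 : 0 < n - d1 x₀ := by
          rw [← hd2 x₀]
          exact Finset.card_pos.2 ⟨y2, Finset.mem_filter.2 ⟨Finset.mem_univ _, hy2⟩⟩
        have h3 : d1 x₀ = 0 ∨ d1 x₀ = n := by tauto
        omega
      · exact hr
    have hs1 : n ≤ ∑ x, d1 x := by
      have e1 : ∑ x, d1 x
          = ∑ y : Fin n, (Finset.univ.filter fun x : α => (x, y) ∈ D₁.supp).card := by
        calc ∑ x, d1 x
            = ∑ x : α, ∑ y : Fin n, (if (x, y) ∈ D₁.supp then 1 else 0) :=
              Finset.sum_congr rfl fun x _ => Finset.card_filter _ _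
          _ = ∑ y : Fin n, ∑ x : α, (if (x, y) ∈ D₁.supp then 1 else 0) := Finset.sum_comm
          _ = _ := Finset.sum_congr rfl fun y _ => (Finset.card_filter _ _).symm
      rw [e1]
      calc n = ∑ _y : Fin n, 1 := by simp
        _ ≤ _ := Finset.sum_le_sum fun y _ => Finset.card_pos.2
              ⟨(hrows y).1.choose,
                Finset.mem_filter.2 ⟨Finset.mem_univ _, (hrows y).1.choose_spec⟩⟩
    have hs2 : n ≤ ∑ x, (n - d1 x) := by
      have e1 : ∑ x, (n - d1 x)
          = ∑ y : Fin n, (Finset.univ.filter fun x : α => (x, y) ∈ D₂.supp).card := by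
        calc ∑ x, (n - d1 x)
            = ∑ x : α, (Finset.univ.filter fun y : Fin n => (x, y) ∈ D₂.supp).card :=
              Finset.sum_congr rfl fun x _ => (hd2 x).symm
          _ = ∑ x : α, ∑ y : Fin n, (if (x, y) ∈ D₂.supp then 1 else 0) :=
              Finset.sum_congr rfl fun x _ => Finset.card_filter _ _
          _ = ∑ y : Fin n, ∑ x : α, (if (x, y) ∈ D₂.supp then 1 else 0) := Finset.sum_comm
          _ = _ := Finset.sum_congr rfl fun y _ => (Finset.card_filter _ _).symm
      rw [e1]
      calc n = ∑ _y : Fin n, 1 := by simp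
        _ ≤ _ := Finset.sum_le_sum fun y _ => Finset.card_pos.2
              ⟨(hrows y).2.choose,
                Finset.mem_filter.2 ⟨Finset.mem_univ _, (hrows y).2.choose_spec⟩⟩
    have HC : ∀ A : Finset α, A.Nonempty → A ≠ Finset.univ → minDeg G ≤ cutP G A :=
      fun A h1 h2 => cut_ge G hmax A h1 h2
    have Hdeg : ∀ x, minDeg G ≤ (G.neighborFinset x).card := by
      intro x
      have h1 : minDeg G ≤ deg G x := Nat.sInf_le ⟨x, rfl⟩
      have h2 : deg G x = (G.neighborFinset x).card := by
        rw [deg, Set.ncard_eq_toFinset_card', SimpleGraph.neighborFinset_def]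
      omega
    have hM := MAIN G n (minDeg G) (by omega) HC Hdeg _ d1 rfl hd1n hs1 hs2
    refine le_trans (min_le_right _ _) (le_trans ?_ hkey)
    calc n ^ 2 * minDeg G = n * (n * minDeg G) := by ring
      _ ≤ Tfun G n d1 := hM
end
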